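/- arXiv:1703.00325 — 6 statements merged into one kernel-verified Lean document; each statement's English description precedes it below -/
import Mathlib

section
/- Let q ≥ 1 be an integer, h > 0, and let P(x) = Σ_{l=0}^{q} a_l x^l be a real polynomial of degree ≤ q. Set w_i = i! · a_i · h^i for i = 1, …, q. Then the Jiang–Shu smoothness indicator of P satisfies the exact bilinear-form identity I[P] = Σ_{i=1}^{q} Σ_{j=1}^{q} C_{i,j} w_i w_j, where C is the symmetric q×q matrix whose entries, for 1 ≤ i ≤ j ≤ q, are C_{i,j} = Σ_{m=1}^{i} 2^{2m−i−j} / ((i−m)! (j−m)! (i+j−2m+1)) if i+j is even, and C_{i,j} = 0 if i+j is odd. -/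
/-!
Write `P = ∑ aᵢ xⁱ`. Then `P⁽ˡ⁾ = ∑ᵢ (i)ₗ aᵢ x^(i-l)` with the falling factorial `(i)ₗ`, so
each term of `I[P]` is a quadratic form in the `aᵢ` whose entries are the moments
`∫_{-h/2}^{h/2} x^(i+j-2l)`. These vanish for odd `i + j` and equal
`2 (h/2)^(i+j-2l+1) / (i+j-2l+1)` otherwise; together with `(i)ₗ (i-l)! = i!` the powers of `h`
and `2` regroup into the `l`-th summand of `C i j wᵢ wⱼ`. Exchanging the sums over `l` and
`(i, j)` gives the identity, the range of `l` shrinking to `l ≤ min i j` because `(i)ₗ = 0`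
for `l > i`.
-/

open Finset Polynomial Nat

/-- Cell average of `u` over the cell `Ω_j = [(j-1/2)h, (j+1/2)h]`. -/
noncomputable def cellAvg (h : ℝ) (j : ℤ) (u : ℝ → ℝ) : ℝ :=
  (1 / h) * ∫ x in (((j : ℝ) - 1/2) * h)..(((j : ℝ) + 1/2) * h), u x

/-- Jiang–Shu smoothness indicator on `Ω_0 = [-h/2, h/2]` for a polynomial of degree ≤ q. -/
noncomputable def JS (q : ℕ) (h : ℝ) (P : Polynomial ℝ) : ℝ :=
  ∑ l ∈ Finset.Icc 1 q, h ^ (2 * l - 1) *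
    ∫ x in (-h/2)..(h/2), (Polynomial.eval x ((⇑Polynomial.derivative)^[l] P)) ^ 2

/-- The symmetric matrix representing the Jiang–Shu indicator as a bilinear form:
for `1 ≤ i ≤ j`, `C i j = ∑_{m=1}^{i} 2^(2m-i-j)/((i-m)!(j-m)!(i+j-2m+1))` if `i+j` is even,
and `0` if `i+j` is odd (extended symmetrically via `min i j`). -/
noncomputable def Cmat (i j : ℕ) : ℝ :=
  if (i + j) % 2 = 0 then
    ∑ m ∈ Finset.Icc 1 (min i j),
      (2 : ℝ) ^ (2 * (m : ℤ) - i - j) /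
        ((Nat.factorial (i - m)) * (Nat.factorial (j - m)) * ((i + j - 2 * m + 1 : ℕ) : ℝ))
  else 0

theorem integral_pow_neg_self (c : ℝ) (n : ℕ) :
    ∫ x in -c..c, x ^ n = if Even n then 2 * c ^ (n + 1) / (n + 1) else 0 := by
  rw [integral_pow]
  split_ifs with hn
  · rw [hn.add_one.neg_pow]; ring
  · rw [(Nat.not_even_iff_odd.1 hn).add_one.neg_pow, sub_self, zero_div]

theorem eval_iterate_derivative_eq_sum_Icc {R : Type*} [CommSemiring R] {P : R[X]} {q l : ℕ}
    (hP : P.natDegree ≤ q) (hl : 1 ≤ l) (x : R) :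
    (derivative^[l] P).eval x =
      ∑ i ∈ Icc 1 q, (i.descFactorial l : R) * P.coeff i * x ^ (i - l) := by
  have hdrop : ∑ i ∈ range (q + 1), (i.descFactorial l : R) * P.coeff i * x ^ (i - l)
      = ∑ i ∈ Icc 1 q, (i.descFactorial l : R) * P.coeff i * x ^ (i - l) := by
    have hsub : Icc 1 q ⊆ range (q + 1) := fun i hi => by
      simp only [mem_Icc, mem_range] at hi ⊢; omega
    refine (sum_subset hsub fun i hi hi' => ?_).symm
    obtain rfl : i = 0 := by simp only [mem_Icc, mem_range] at hi hi'; omega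
    simp [Nat.descFactorial_of_lt hl]
  conv_lhs => rw [P.as_sum_range_C_mul_X_pow' (n := q + 1) (by omega)]
  rw [← hdrop, iterate_derivative_sum, eval_finsetSum]
  refine sum_congr rfl fun i _ => ?_
  rw [iterate_derivative_C_mul, iterate_derivative_X_pow_eq_C_mul]
  simp only [eval_mul, eval_C, eval_pow, eval_X]
  ring

theorem integral_sq_sum_mul_pow {ι : Type*} (s : Finset ι) (c : ι → ℝ) (n : ι → ℕ)
    (a b : ℝ) :
    ∫ x in a..b, (∑ i ∈ s, c i * x ^ n i) ^ 2
      = ∑ i ∈ s, ∑ j ∈ s, c i * c j * ∫ x in a..b, x ^ (n i + n j) := by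
  have hexpand (x : ℝ) : (∑ i ∈ s, c i * x ^ n i) ^ 2
      = ∑ i ∈ s, ∑ j ∈ s, c i * c j * x ^ (n i + n j) := by
    rw [sq, sum_mul_sum]
    exact sum_congr rfl fun i _ => sum_congr rfl fun j _ => by ring
  simp only [hexpand]
  have hint {f : ℝ → ℝ} (hf : Continuous f) : IntervalIntegrable f MeasureTheory.volume a b :=
    hf.intervalIntegrable a b
  rw [intervalIntegral.integral_finsetSum fun i _ => hint (by fun_prop)]
  refine sum_congr rfl fun i _ => ?_
  rw [intervalIntegral.integral_finsetSum fun j _ => hint (by fun_prop)]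
  simp only [intervalIntegral.integral_const_mul]

/-- The contribution of the monomials `a xⁱ` and `b xʲ` to the `l`-th term of `JS`. -/
noncomputable def jsSummand (h a b : ℝ) (i j l : ℕ) : ℝ :=
  h ^ (2 * l - 1) * ((i.descFactorial l : ℝ) * a * ((j.descFactorial l : ℝ) * b) *
    ∫ x in (-h / 2)..(h / 2), x ^ (i - l + (j - l)))

theorem jsSummand_eq (h a b : ℝ) {i j l : ℕ} (hl : 1 ≤ l) (hli : l ≤ i) (hlj : l ≤ j) :
    jsSummand h a b i j l
      = (if (i + j) % 2 = 0 then
          (2 : ℝ) ^ (2 * (l : ℤ) - i - j) /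
            ((i - l)! * (j - l)! * ((i + j - 2 * l + 1 : ℕ) : ℝ))
        else 0) * ((i ! : ℝ) * a * h ^ i) * ((j ! : ℝ) * b * h ^ j) := by
  obtain ⟨u, rfl⟩ : ∃ u, i = u + l := ⟨i - l, by omega⟩
  obtain ⟨v, rfl⟩ : ∃ v, j = v + l := ⟨j - l, by omega⟩
  obtain ⟨k, rfl⟩ : ∃ k, l = k + 1 := ⟨l - 1, by omega⟩
  have hparity : Even (u + v) ↔ (u + (k + 1) + (v + (k + 1))) % 2 = 0 := by
    rw [Nat.even_iff]; omega
  simp only [jsSummand, Nat.add_sub_cancel, neg_div, integral_pow_neg_self, ← hparity]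
  split_ifs
  · have hfac (n : ℕ) : ((n + (k + 1)) ! : ℝ) = n ! * (n + (k + 1)).descFactorial (k + 1) := by
      exact_mod_cast (Nat.add_sub_cancel n (k + 1) ▸
        Nat.factorial_mul_descFactorial (Nat.le_add_left (k + 1) n)).symm
    have hexp :
        2 * ((k + 1 : ℕ) : ℤ) - ((u + (k + 1) : ℕ) : ℤ) - ((v + (k + 1) : ℕ) : ℤ)
          = -((u + v : ℕ) : ℤ) := by push_cast; ring
    rw [hfac u, hfac v, hexp, zpow_neg, zpow_natCast,
      show u + (k + 1) + (v + (k + 1)) - 2 * (k + 1) + 1 = u + v + 1 by omega,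
      show 2 * (k + 1) - 1 = 2 * k + 1 by omega, div_pow]
    field_simp
    push_cast
    ring
  · simp

theorem sum_jsSummand_eq (h a b : ℝ) {q i j : ℕ} (hi : i ≤ q) (hj : j ≤ q) :
    ∑ l ∈ Icc 1 q, jsSummand h a b i j l
      = Cmat i j * ((i ! : ℝ) * a * h ^ i) * ((j ! : ℝ) * b * h ^ j) := by
  have hsub : Icc 1 (min i j) ⊆ Icc 1 q := Icc_subset_Icc_right (by omega)
  calc _ = ∑ l ∈ Icc 1 (min i j), jsSummand h a b i j l := by
        refine (sum_subset hsub fun l hl hl' => ?_).symm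
        have hlarge : i < l ∨ j < l := by simp only [mem_Icc, le_min_iff] at hl hl'; omega
        rcases hlarge with hlarge | hlarge <;>
          simp [jsSummand, Nat.descFactorial_eq_zero_iff_lt.2 hlarge]
    _ = ∑ l ∈ Icc 1 (min i j), (if (i + j) % 2 = 0 then
          (2 : ℝ) ^ (2 * (l : ℤ) - i - j) /
            ((i - l)! * (j - l)! * ((i + j - 2 * l + 1 : ℕ) : ℝ))
        else 0) * ((i ! : ℝ) * a * h ^ i) * ((j ! : ℝ) * b * h ^ j) := by
        refine sum_congr rfl fun l hl => ?_
        simp only [mem_Icc, le_min_iff] at hl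
        exact jsSummand_eq h a b hl.1 hl.2.1 hl.2.2
    _ = _ := by rw [← sum_mul, ← sum_mul, Cmat, sum_ite_irrel, sum_const_zero]

theorem jiang_shu_bilinear_form_general (q : ℕ) (h : ℝ)
    (P : Polynomial ℝ) (hP : P.natDegree ≤ q) (w : ℕ → ℝ)
    (hw : ∀ i, w i = (Nat.factorial i : ℝ) * P.coeff i * h ^ i) :
    JS q h P = ∑ i ∈ Finset.Icc 1 q, ∑ j ∈ Finset.Icc 1 q, Cmat i j * w i * w j := by
  have hJS : JS q h P = ∑ l ∈ Icc 1 q, ∑ i ∈ Icc 1 q, ∑ j ∈ Icc 1 q,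
      jsSummand h (P.coeff i) (P.coeff j) i j l := by
    refine sum_congr rfl fun l hl => ?_
    simp only [eval_iterate_derivative_eq_sum_Icc hP (mem_Icc.1 hl).1, integral_sq_sum_mul_pow,
      mul_sum, jsSummand]
  rw [hJS, sum_comm]
  refine sum_congr rfl fun i hi => ?_
  rw [sum_comm]
  refine sum_congr rfl fun j hj => ?_
  rw [hw, hw]
  exact sum_jsSummand_eq h _ _ (mem_Icc.1 hi).2 (mem_Icc.1 hj).2

/-- exact bilinear-form identity for the Jiang–Shu indicator. -/
theorem jiang_shu_bilinear_form (q : ℕ) (hq : 1 ≤ q) (h : ℝ) (hh : 0 < h)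
    (P : Polynomial ℝ) (hP : P.natDegree ≤ q) (w : ℕ → ℝ)
    (hw : ∀ i, w i = (Nat.factorial i : ℝ) * P.coeff i * h ^ i) :
    JS q h P = ∑ i ∈ Finset.Icc 1 q, ∑ j ∈ Finset.Icc 1 q, Cmat i j * w i * w j :=
  jiang_shu_bilinear_form_general q h P hP w hw
end

section
/- Let q ≥ 1 and fix integers j_0 ≤ 0 ≤ j_0 + q. Let u : ℝ → ℝ be of class C^∞. For each h > 0 let P^h(x) = Σ_{i=0}^{q} a_i(h) x^i be the unique polynomial of degree ≤ q satisfying (1/h) ∫_{Ω_j} P^h(x) dx = ū_j for j = j_0, …, j_0+q. Then for each i = 0, 1, …, q one has a_i(h) = u^{(i)}(0)/i! + O(h^{q−i+1}) as h → 0⁺. -/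
open Finset Polynomial intervalIntegral Set


/-- Cell average of `x^k` over the unit cell centered at `j`. -/
noncomputable def vcoef (j : ℤ) (k : ℕ) : ℝ :=
  (((j : ℝ) + 1/2) ^ (k+1) - ((j : ℝ) - 1/2) ^ (k+1)) / (k+1)

lemma cellAvg_sum (q : ℕ) (c : ℕ → ℝ) {h : ℝ} (hh : 0 < h) (j : ℤ) :
    cellAvg h j (fun x => ∑ k ∈ Finset.range (q+1), c k * x^k)
      = ∑ k ∈ Finset.range (q+1), c k * vcoef j k * h^k := by
  unfold cellAvg
  rw [intervalIntegral.integral_finset_sum]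
  · rw [Finset.mul_sum]
    refine Finset.sum_congr rfl fun k _ => ?_
    rw [integral_const_mul, integral_pow]
    unfold vcoef
    have hk : ((k : ℝ) + 1) ≠ 0 := by positivity
    rw [mul_pow, mul_pow, pow_succ h k]
    field_simp
  · intro k _
    exact (continuous_const.mul (continuous_pow k)).intervalIntegrable _ _

lemma cellAvg_poly (q : ℕ) (p : Polynomial ℝ) (hp : p.natDegree ≤ q) {h : ℝ} (hh : 0 < h)
    (j : ℤ) :
    cellAvg h j (fun x => p.eval x) = ∑ k ∈ Finset.range (q+1), p.coeff k * vcoef j k * h^k := by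
  have he : (fun x : ℝ => p.eval x) = fun x => ∑ k ∈ Finset.range (q+1), p.coeff k * x^k := by
    funext x
    exact p.eval_eq_sum_range' (Nat.lt_succ_of_le hp) x
  rw [he, cellAvg_sum q _ hh j]


noncomputable def Vmat (q : ℕ) (j0 : ℤ) : Matrix (Fin (q+1)) (Fin (q+1)) ℝ :=
  fun j k => vcoef (j0 + (j : ℕ)) (k : ℕ)

lemma Vmat_det_ne_zero (q : ℕ) (j0 : ℤ) : (Vmat q j0).det ≠ 0 := by
  intro hdet
  obtain ⟨v, hv0, hv⟩ := (Matrix.exists_mulVec_eq_zero_iff).mpr hdet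
  -- antiderivative polynomial
  set Q : Polynomial ℝ :=
    ∑ k : Fin (q+1), Polynomial.C (v k / ((k : ℕ) + 1)) * Polynomial.X ^ ((k : ℕ) + 1) with hQ
  have hQeval : ∀ x : ℝ, Q.eval x = ∑ k : Fin (q+1), v k / ((k : ℕ) + 1) * x ^ ((k : ℕ) + 1) := by
    intro x
    rw [hQ, Polynomial.eval_finset_sum]
    simp
  -- the telescoping step
  have hstep : ∀ j : Fin (q+1),
      Q.eval (((j0 : ℝ) + (j : ℕ)) + 1/2) = Q.eval (((j0 : ℝ) + (j : ℕ)) - 1/2) := by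
    intro j
    have h1 : (Vmat q j0).mulVec v j = 0 := by rw [hv]; rfl
    rw [Matrix.mulVec, dotProduct] at h1
    have h2 : ∑ k : Fin (q+1), Vmat q j0 j k * v k = 0 := h1
    rw [hQeval, hQeval, ← sub_eq_zero, ← Finset.sum_sub_distrib]
    rw [← h2]
    refine Finset.sum_congr rfl fun k _ => ?_
    unfold Vmat vcoef
    have hk : (((k : ℕ) : ℝ) + 1) ≠ 0 := by positivity
    push_cast
    field_simp
  -- all q+2 node values equal
  have hnodes : ∀ m : ℕ, m ≤ q + 1 →
      Q.eval ((j0 : ℝ) - 1/2 + m) = Q.eval ((j0 : ℝ) - 1/2) := by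
    intro m
    induction m with
    | zero => intro _; norm_num
    | succ n ih =>
      intro hn
      have hn' : n ≤ q := Nat.lt_succ_iff.mp hn
      have e1 : (j0 : ℝ) - 1/2 + (n+1 : ℕ) = ((j0 : ℝ) + ((⟨n, Nat.lt_succ_of_le hn'⟩ : Fin (q+1)) : ℕ)) + 1/2 := by
        push_cast; ring
      have e2 : ((j0 : ℝ) + ((⟨n, Nat.lt_succ_of_le hn'⟩ : Fin (q+1)) : ℕ)) - 1/2 = (j0 : ℝ) - 1/2 + (n : ℕ) := by
        push_cast; ring
      rw [e1, hstep, e2, ih (le_trans hn' (Nat.le_succ q))]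
  -- Q minus constant has too many roots
  have hconst : Q = Polynomial.C (Q.eval ((j0 : ℝ) - 1/2)) := by
    have hR : Q - Polynomial.C (Q.eval ((j0 : ℝ) - 1/2)) = 0 := by
      apply Polynomial.eq_zero_of_natDegree_lt_card_of_eval_eq_zero _
        (f := fun m : Fin (q+2) => (j0 : ℝ) - 1/2 + (m : ℕ))
      · intro a b hab
        have : ((a : ℕ) : ℝ) = ((b : ℕ) : ℝ) := by linarith [hab]
        exact Fin.ext (Nat.cast_injective this)
      · intro m
        simp only [Polynomial.eval_sub, Polynomial.eval_C]
        rw [hnodes m (Nat.lt_succ_iff.mp m.isLt), sub_self]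
      · refine lt_of_le_of_lt (Polynomial.natDegree_sub_le _ _) ?_
        rw [Fintype.card_fin]
        have h1 : Q.natDegree ≤ q + 1 := by
          rw [hQ]
          refine Polynomial.natDegree_sum_le_of_forall_le _ _ fun k _ => ?_
          exact le_trans (Polynomial.natDegree_C_mul_X_pow_le _ _) (Nat.succ_le_succ (Nat.lt_succ_iff.mp k.isLt))
        refine lt_of_le_of_lt (max_le h1 ?_) (Nat.lt_succ_self (q+1))
        simp [Polynomial.natDegree_C]
    exact sub_eq_zero.mp hR
  -- extract a nonzero coordinate and derive contradiction
  obtain ⟨k, hk⟩ := Function.ne_iff.mp hv0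
  have hcoeff : Q.coeff ((k : ℕ) + 1) = v k / ((k : ℕ) + 1) := by
    rw [hQ, Polynomial.finset_sum_coeff]
    rw [Finset.sum_eq_single k]
    · simp
    · intro b _ hb
      simp only [Polynomial.coeff_C_mul, Polynomial.coeff_X_pow]
      rw [if_neg, mul_zero]
      intro hcontra
      exact hb (Fin.ext (Nat.succ_injective hcontra.symm))
    · intro hmem; exact absurd (Finset.mem_univ k) hmem
  rw [hconst] at hcoeff
  rw [Polynomial.coeff_C, if_neg (Nat.succ_ne_zero _)] at hcoeff
  have hk1 : (((k : ℕ) : ℝ) + 1) ≠ 0 := by positivity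
  exact hk ((div_eq_zero_iff.mp hcoeff.symm).resolve_right hk1)


lemma iteratedDerivWithin_eq_iteratedDeriv_of_contDiff {f : ℝ → ℝ} (hf : ContDiff ℝ (⊤ : ℕ∞) f)
    {s : Set ℝ} (hs : UniqueDiffOn ℝ s) {x : ℝ} (hx : x ∈ s) (m : ℕ) :
    iteratedDerivWithin m f s x = iteratedDeriv m f x := by
  have hf2 : ContDiff ℝ ((⊤:ℕ∞) : WithTop ℕ∞) f := hf.of_le (by simp)
  have h := contDiff_iff_ftaylorSeries.mp hf2
  rw [iteratedDerivWithin_eq_iteratedFDerivWithin, iteratedDeriv_eq_iteratedFDeriv,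
    ← (h.hasFTaylorSeriesUpToOn s).eq_iteratedFDerivWithin_of_uniqueDiffOn (by exact_mod_cast le_top) hs hx,
    h.eq_iteratedFDeriv (by exact_mod_cast le_top) x]

lemma taylor_bound (q : ℕ) (u : ℝ → ℝ) (hu : ContDiff ℝ (⊤ : ℕ∞) u) :
    ∃ M : ℝ, 0 ≤ M ∧ ∀ x ∈ Set.Icc (-1:ℝ) 1,
      |u x - ∑ k ∈ Finset.range (q+1), iteratedDeriv k u 0 / (Nat.factorial k) * x^k|
        ≤ M * |x|^(q+1) := by
  -- a uniform bound for the (q+1)-st derivative on [-1,1]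
  obtain ⟨C0, hC0⟩ := (isCompact_Icc (a := (-1:ℝ)) (b := 1)).exists_bound_of_continuousOn
    ((hu.continuous_iteratedDeriv (q+1) (by exact_mod_cast le_top)).continuousOn)
  set C := max C0 0 with hC
  have hCnn : 0 ≤ C := le_max_right _ _
  have hCb : ∀ y ∈ Set.Icc (-1:ℝ) 1, |iteratedDeriv (q+1) u y| ≤ C :=
    fun y hy => le_trans (hC0 y hy) (le_max_left _ _)
  refine ⟨C / Nat.factorial q, by positivity, ?_⟩
  intro x hx
  have hu' : ContDiff ℝ (↑(q+1)) u := hu.of_le (by exact_mod_cast le_top)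
  rcases le_or_gt 0 x with hx0 | hx0
  · -- x ∈ [0,1]
    have hxI : x ∈ Set.Icc (0:ℝ) 1 := ⟨hx0, hx.2⟩
    have hud : UniqueDiffOn ℝ (Set.Icc (0:ℝ) 1) := uniqueDiffOn_Icc one_pos
    have hT : taylorWithinEval u q (Set.Icc (0:ℝ) 1) 0 x
        = ∑ k ∈ Finset.range (q+1), iteratedDeriv k u 0 / (Nat.factorial k) * x^k := by
      rw [taylor_within_apply]
      refine Finset.sum_congr rfl fun k _ => ?_
      rw [iteratedDerivWithin_eq_iteratedDeriv_of_contDiff hu hud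
        (Set.left_mem_Icc.mpr zero_le_one) k]
      simp only [smul_eq_mul, sub_zero]
      ring
    have := taylor_mean_remainder_bound (n := q) (C := C) zero_le_one
      (hu'.contDiffOn) hxI ?_
    · rw [hT] at this
      calc |u x - ∑ k ∈ Finset.range (q+1), iteratedDeriv k u 0 / (Nat.factorial k) * x^k|
          ≤ C * (x - 0)^(q+1) / Nat.factorial q := this
        _ = C / Nat.factorial q * |x|^(q+1) := by
            rw [sub_zero, abs_of_nonneg hx0]; ring
    · intro y hy
      rw [iteratedDerivWithin_eq_iteratedDeriv_of_contDiff hu hud hy]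
      exact hCb y ⟨le_trans (by norm_num) hy.1, hy.2⟩
  · -- x ∈ [-1,0): use the reflected function
    set w : ℝ → ℝ := fun t => u (-t) with hw
    have hwc : ContDiff ℝ (⊤ : ℕ∞) w := hu.comp (contDiff_neg)
    have hwd : ∀ (m : ℕ) (y : ℝ), iteratedDeriv m w y = (-1:ℝ)^m * iteratedDeriv m u (-y) := by
      intro m y
      simpa [smul_eq_mul] using iteratedDeriv_comp_neg m u y
    have hxI : -x ∈ Set.Icc (0:ℝ) 1 := ⟨by linarith, by linarith [hx.1]⟩
    have hud : UniqueDiffOn ℝ (Set.Icc (0:ℝ) 1) := uniqueDiffOn_Icc one_pos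
    have hT : taylorWithinEval w q (Set.Icc (0:ℝ) 1) 0 (-x)
        = ∑ k ∈ Finset.range (q+1), iteratedDeriv k u 0 / (Nat.factorial k) * x^k := by
      rw [taylor_within_apply]
      refine Finset.sum_congr rfl fun k _ => ?_
      rw [iteratedDerivWithin_eq_iteratedDeriv_of_contDiff hwc hud
        (Set.left_mem_Icc.mpr zero_le_one) k, hwd k 0, neg_zero]
      simp only [smul_eq_mul, sub_zero]
      rw [neg_pow]
      ring_nf
      rw [mul_comm k 2, pow_mul]
      norm_num
    have hwq : ContDiff ℝ (↑(q+1)) w := hwc.of_le (by exact_mod_cast le_top)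
    have := taylor_mean_remainder_bound (n := q) (C := C) zero_le_one
      (hwq.contDiffOn) hxI ?_
    · rw [hT] at this
      have hwx : w (-x) = u x := by simp [hw]
      rw [hwx] at this
      calc |u x - ∑ k ∈ Finset.range (q+1), iteratedDeriv k u 0 / (Nat.factorial k) * x^k|
          ≤ C * (-x - 0)^(q+1) / Nat.factorial q := this
        _ = C / Nat.factorial q * |x|^(q+1) := by
            rw [sub_zero, abs_of_neg hx0]; ring
    · intro y hy
      rw [iteratedDerivWithin_eq_iteratedDeriv_of_contDiff hwc hud hy, hwd]
      calc |(-1:ℝ)^(q+1) * iteratedDeriv (q+1) u (-y)|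
          = |iteratedDeriv (q+1) u (-y)| := by
            rw [abs_mul, abs_pow, abs_neg, abs_one, one_pow, one_mul]
        _ ≤ C := hCb (-y) ⟨by linarith [hy.2], by linarith [hy.1]⟩

set_option maxHeartbeats 1000000 in
/-- the coefficients of the cell-average interpolating polynomial of a smooth
function satisfy `a_i(h) = u^{(i)}(0)/i! + O(h^{q-i+1})` as `h → 0⁺`. -/
theorem interpolation_coeff_asymptotics (q : ℕ) (hq : 1 ≤ q) (j0 : ℤ)
    (hj0 : j0 ≤ 0) (hj0' : 0 ≤ j0 + q)
    (u : ℝ → ℝ) (hu : ContDiff ℝ (⊤ : ℕ∞) u)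
    (P : ℝ → Polynomial ℝ)
    (hP : ∀ h : ℝ, 0 < h → (P h).natDegree ≤ q ∧
      ∀ j ∈ Finset.Icc j0 (j0 + q), cellAvg h j (fun x => (P h).eval x) = cellAvg h j u) :
    ∀ i ≤ q, ∃ C > 0, ∃ h0 > 0, ∀ h : ℝ, 0 < h → h < h0 →
      |(P h).coeff i - iteratedDeriv i u 0 / (Nat.factorial i : ℝ)| ≤ C * h ^ (q - i + 1) := by
  intro i hi
  obtain ⟨M, hM0, hMb⟩ := taylor_bound q u hu
  have hdet := Vmat_det_ne_zero q j0
  set W := (Vmat q j0)⁻¹ with hW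
  have hWV : W * (Vmat q j0) = 1 := Matrix.nonsing_inv_mul _ (isUnit_iff_ne_zero.mpr hdet)
  set B : ℝ := |(j0:ℝ)| + q + 1 with hB
  have hB1 : (1:ℝ) ≤ B := by
    have : (0:ℝ) ≤ |(j0:ℝ)| := abs_nonneg _
    have : (0:ℝ) ≤ (q:ℝ) := Nat.cast_nonneg q
    rw [hB]; linarith [abs_nonneg ((j0:ℝ))]
  have hBpos : (0:ℝ) < B := lt_of_lt_of_le one_pos hB1
  set ifin : Fin (q+1) := ⟨i, Nat.lt_succ_of_le hi⟩ with hifin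
  set K : ℝ := ∑ j : Fin (q+1), |W ifin j| with hK
  have hK0 : (0:ℝ) ≤ K := Finset.sum_nonneg fun _ _ => abs_nonneg _
  refine ⟨K * (M * B^(q+1)) + 1, by positivity, 1 / B, by positivity, ?_⟩
  intro h hh hhB
  have hBh : B * h < 1 := by
    have := (lt_div_iff₀ hBpos).mp hhB
    linarith
  set c : ℕ → ℝ := fun k => iteratedDeriv k u 0 / (Nat.factorial k : ℝ) with hc
  set a : Fin (q+1) → ℝ := fun k => (P h).coeff (k:ℕ) * h^(k:ℕ) with ha
  set t : Fin (q+1) → ℝ := fun k => c (k:ℕ) * h^(k:ℕ) with ht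
  obtain ⟨hdeg, havg⟩ := hP h hh
  have hucont : Continuous u := hu.continuous
  have hTcont : Continuous (fun x : ℝ => ∑ k ∈ Finset.range (q+1), c k * x^k) := by
    continuity
  -- the residual identity
  have hres : ∀ j : Fin (q+1), (Vmat q j0).mulVec (a - t) j
      = cellAvg h (j0 + (j:ℕ)) (fun x => u x - ∑ k ∈ Finset.range (q+1), c k * x^k) := by
    intro j
    have e1 : (Vmat q j0).mulVec (a - t) j
        = ∑ k ∈ Finset.range (q+1), (P h).coeff k * vcoef (j0 + (j:ℕ)) k * h^k
          - ∑ k ∈ Finset.range (q+1), c k * vcoef (j0 + (j:ℕ)) k * h^k := by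
      rw [Matrix.mulVec, dotProduct, ← Finset.sum_sub_distrib,
        ← Fin.sum_univ_eq_sum_range (fun k => (P h).coeff k * vcoef (j0 + (j:ℕ)) k * h^k
          - c k * vcoef (j0 + (j:ℕ)) k * h^k) (q+1)]
      refine Finset.sum_congr rfl fun k _ => ?_
      simp only [Pi.sub_apply, ha, ht, Vmat]
      ring
    have e2 : cellAvg h (j0 + (j:ℕ)) (fun x => (P h).eval x)
        = ∑ k ∈ Finset.range (q+1), (P h).coeff k * vcoef (j0 + (j:ℕ)) k * h^k :=
      cellAvg_poly q (P h) hdeg hh _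
    have e3 : cellAvg h (j0 + (j:ℕ)) (fun x => ∑ k ∈ Finset.range (q+1), c k * x^k)
        = ∑ k ∈ Finset.range (q+1), c k * vcoef (j0 + (j:ℕ)) k * h^k :=
      cellAvg_sum q c hh _
    have e4 : cellAvg h (j0 + (j:ℕ)) (fun x => (P h).eval x) = cellAvg h (j0 + (j:ℕ)) u := by
      apply havg
      rw [Finset.mem_Icc]
      constructor
      · linarith [Int.ofNat_nonneg (j:ℕ)]
      · have : ((j:ℕ) : ℤ) ≤ (q : ℤ) := by exact_mod_cast Nat.lt_succ_iff.mp j.isLt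
        linarith
    have e5 : cellAvg h (j0 + (j:ℕ)) u
        - cellAvg h (j0 + (j:ℕ)) (fun x => ∑ k ∈ Finset.range (q+1), c k * x^k)
        = cellAvg h (j0 + (j:ℕ)) (fun x => u x - ∑ k ∈ Finset.range (q+1), c k * x^k) := by
      unfold cellAvg
      rw [← mul_sub, ← intervalIntegral.integral_sub
        (hucont.intervalIntegrable _ _) (hTcont.intervalIntegrable _ _)]
    rw [e1, ← e2, ← e3, e4, e5]
  -- the residual bound
  have hrb : ∀ j : Fin (q+1), |(Vmat q j0).mulVec (a - t) j| ≤ M * B^(q+1) * h^(q+1) := by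
    intro j
    rw [hres j]
    set J : ℤ := j0 + (j:ℕ) with hJ
    have hJb : |(J:ℝ)| ≤ |(j0:ℝ)| + q := by
      rw [hJ]
      push_cast
      refine le_trans (abs_add_le _ _) ?_
      have h1 : |((j:ℕ):ℝ)| = ((j:ℕ):ℝ) := abs_of_nonneg (Nat.cast_nonneg _)
      have h2 : ((j:ℕ):ℝ) ≤ q := by exact_mod_cast Nat.lt_succ_iff.mp j.isLt
      linarith
    have hab : ((J:ℝ) - 1/2) * h ≤ ((J:ℝ) + 1/2) * h := by nlinarith
    have hbound : ∀ x ∈ Set.uIoc (((J:ℝ) - 1/2) * h) (((J:ℝ) + 1/2) * h),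
        |u x - ∑ k ∈ Finset.range (q+1), c k * x^k| ≤ M * (B*h)^(q+1) := by
      intro x hx
      rw [Set.uIoc_of_le hab] at hx
      have hxb : |x| ≤ B * h := by
        have h1 : ((J:ℝ) - 1/2) * h ≤ x := le_of_lt hx.1
        have h2 : x ≤ ((J:ℝ) + 1/2) * h := hx.2
        rw [abs_le]
        constructor
        · nlinarith [abs_le.mp hJb, hh.le]
        · nlinarith [abs_le.mp hJb, hh.le]
      have hx1 : x ∈ Set.Icc (-1:ℝ) 1 := by
        rw [Set.mem_Icc]
        have := abs_le.mp (le_trans hxb (le_of_lt hBh))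
        exact this
      refine le_trans (hMb x hx1) ?_
      exact mul_le_mul_of_nonneg_left (pow_le_pow_left₀ (abs_nonneg x) hxb (q+1)) hM0
    have hint : ‖∫ x in (((J:ℝ) - 1/2) * h)..(((J:ℝ) + 1/2) * h),
          (u x - ∑ k ∈ Finset.range (q+1), c k * x^k)‖
        ≤ M * (B*h)^(q+1) * |(((J:ℝ) + 1/2) * h) - (((J:ℝ) - 1/2) * h)| :=
      intervalIntegral.norm_integral_le_of_norm_le_const (fun x hx => by
        rw [Real.norm_eq_abs]; exact hbound x hx)
    rw [Real.norm_eq_abs] at hint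
    have hba : |(((J:ℝ) + 1/2) * h) - (((J:ℝ) - 1/2) * h)| = h := by
      rw [abs_of_nonneg (by linarith)]; ring
    rw [hba] at hint
    unfold cellAvg
    rw [abs_mul]
    have h1h : |1/h| = 1/h := abs_of_pos (by positivity)
    rw [h1h]
    calc (1/h) * |∫ x in (((J:ℝ) - 1/2) * h)..(((J:ℝ) + 1/2) * h),
          (u x - ∑ k ∈ Finset.range (q+1), c k * x^k)|
        ≤ (1/h) * (M * (B*h)^(q+1) * h) := mul_le_mul_of_nonneg_left hint (by positivity)
      _ = M * B^(q+1) * h^(q+1) := by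
          rw [mul_pow]
          field_simp
  -- invert
  have hsolve : a - t = W.mulVec ((Vmat q j0).mulVec (a - t)) := by
    rw [Matrix.mulVec_mulVec, hWV, Matrix.one_mulVec]
  have hcomp : |a ifin - t ifin| ≤ K * (M * B^(q+1) * h^(q+1)) := by
    have : (a - t) ifin = ∑ j : Fin (q+1), W ifin j * (Vmat q j0).mulVec (a - t) j := by
      conv_lhs => rw [hsolve]
      rfl
    rw [show a ifin - t ifin = (a - t) ifin from rfl, this]
    refine le_trans (Finset.abs_sum_le_sum_abs _ _) ?_
    rw [hK, Finset.sum_mul]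
    refine Finset.sum_le_sum fun j _ => ?_
    rw [abs_mul]
    exact mul_le_mul_of_nonneg_left (hrb j) (abs_nonneg _)
  -- conclude
  have hpow : h^(q+1) = h^i * h^(q-i+1) := by
    rw [← pow_add]
    congr 1
    omega
  have hfinal : |(P h).coeff i - c i| * h^i ≤ K * (M * B^(q+1)) * (h^i * h^(q-i+1)) := by
    have e : a ifin - t ifin = ((P h).coeff i - c i) * h^i := by
      simp only [ha, ht, hifin]
      ring
    rw [e, abs_mul, abs_of_pos (pow_pos hh i)] at hcomp
    calc |(P h).coeff i - c i| * h^i ≤ K * (M * B^(q+1) * h^(q+1)) := hcomp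
      _ = K * (M * B^(q+1)) * (h^i * h^(q-i+1)) := by rw [hpow]; ring
  have hhi : (0:ℝ) < h^i := pow_pos hh i
  have : |(P h).coeff i - c i| ≤ K * (M * B^(q+1)) * h^(q-i+1) := by
    have := (mul_le_mul_iff_of_pos_right hhi).mp (by
      calc |(P h).coeff i - c i| * h^i ≤ K * (M * B^(q+1)) * (h^i * h^(q-i+1)) := hfinal
        _ = K * (M * B^(q+1)) * h^(q-i+1) * h^i := by ring)
    exact this
  calc |(P h).coeff i - c i| ≤ K * (M * B^(q+1)) * h^(q-i+1) := this
    _ ≤ (K * (M * B^(q+1)) + 1) * h^(q-i+1) := by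
        have : (0:ℝ) ≤ h^(q-i+1) := le_of_lt (pow_pos hh _)
        nlinarith
end

section
/- Let q ≥ 0 and fix integers j_0 ≤ 0 ≤ j_0 + q. Let u : ℝ → ℝ be of class C^∞. For each h > 0 let P^h be the unique polynomial of degree ≤ q satisfying (1/h) ∫_{Ω_j} P^h(x) dx = ū_j for j = j_0, …, j_0+q. Then the reconstruction is accurate of order q+1 on the central cell: sup_{x ∈ [−h/2, h/2]} |P^h(x) − u(x)| = O(h^{q+1}) as h → 0⁺. -/
open Polynomial Set intervalIntegral

section WenoAux

private lemma weno_abs_le_of_uIoc {x t : ℝ} (ht : t ∈ Set.uIoc (0:ℝ) x) : |t| ≤ |x| := by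
  rcases Set.mem_uIoc.mp ht with ⟨h1, h2⟩ | ⟨h1, h2⟩
  · rw [abs_of_pos h1, abs_of_pos (h1.trans_le h2)]; exact h2
  · rw [abs_of_nonpos h2]
    linarith [neg_le_abs x]

private lemma weno_taylor_bound (n : ℕ) : ∀ (f : ℝ → ℝ), ContDiff ℝ (⊤:ℕ∞) f → ∀ M : ℝ,
    (∀ t ∈ Set.Icc (-1:ℝ) 1, |iteratedDeriv (n+1) f t| ≤ M) →
    ∀ x ∈ Set.Icc (-1:ℝ) 1,
      |f x - ∑ i ∈ Finset.range (n+1), iteratedDeriv i f 0 / (i.factorial : ℝ) * x ^ i|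
        ≤ M * |x| ^ (n+1) := by
  induction n with
  | zero =>
    intro f hf M hM x hx
    rw [Finset.sum_range_one]
    simp only [pow_zero, mul_one, Nat.factorial_zero, Nat.cast_one, div_one,
      iteratedDeriv_zero, pow_one]
    have := Convex.norm_image_sub_le_of_norm_deriv_le (f := f) (s := Set.Icc (-1:ℝ) 1)
      (C := M) (fun y _ => (hf.differentiable (by simp)).differentiableAt)
      (fun y hy => by
        have := hM y hy
        rwa [show deriv f = iteratedDeriv 1 f from (iteratedDeriv_one).symm, Real.norm_eq_abs])
      (convex_Icc _ _) (show (0:ℝ) ∈ Set.Icc (-1:ℝ) 1 by norm_num) hx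
    simpa using this
  | succ n ih =>
    intro f hf M hM x hx
    set g := deriv f with hgdef
    have hg : ContDiff ℝ (⊤:ℕ∞) g := by
      have := hf.iterate_deriv 1
      simpa using this
    have hMg : ∀ t ∈ Set.Icc (-1:ℝ) 1, |iteratedDeriv (n+1) g t| ≤ M := by
      intro t ht
      rw [hgdef, ← iteratedDeriv_succ']
      exact hM t ht
    have hM0 : 0 ≤ M := le_trans (abs_nonneg _) (hM 0 (by norm_num))
    set c : ℕ → ℝ := fun i => iteratedDeriv i f 0 / (i.factorial : ℝ) with hc
    set S : ℝ → ℝ := fun t => ∑ i ∈ Finset.range (n+1),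
      iteratedDeriv i g 0 / (i.factorial : ℝ) * t ^ i with hS
    have key : ∀ t : ℝ, HasDerivAt (fun x => f x - ∑ i ∈ Finset.range (n+2), c i * x ^ i)
        (g t - S t) t := by
      intro t
      have h1 : HasDerivAt f (g t) t :=
        (hf.differentiable (by simp)).differentiableAt.hasDerivAt
      have h2 : HasDerivAt (fun x => ∑ i ∈ Finset.range (n+2), c i * x ^ i)
          (∑ i ∈ Finset.range (n+2), c i * (i * t ^ (i-1))) t := by
        apply HasDerivAt.fun_sum
        intro i _
        exact (hasDerivAt_pow i t).const_mul (c i)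
      have h3 : ∑ i ∈ Finset.range (n+2), c i * (i * t ^ (i-1)) = S t := by
        rw [Finset.sum_range_succ']
        simp only [Nat.cast_zero, zero_mul, mul_zero, add_zero]
        apply Finset.sum_congr rfl
        intro i _
        have hder : iteratedDeriv (i+1) f 0 = iteratedDeriv i g 0 := by
          rw [iteratedDeriv_succ']
        simp only [hc, hder, Nat.add_sub_cancel, Nat.factorial_succ, Nat.cast_mul,
          Nat.cast_add, Nat.cast_one]
        have : ((i:ℝ) + 1) ≠ 0 := by positivity
        field_simp
      rw [← h3]
      exact h1.sub h2
    have hF0 : f 0 - ∑ i ∈ Finset.range (n+2), c i * (0:ℝ) ^ i = 0 := by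
      rw [Finset.sum_range_succ']
      simp [hc]
    have hint : ∀ x : ℝ, f x - ∑ i ∈ Finset.range (n+2), c i * x ^ i
        = ∫ t in (0:ℝ)..x, (g t - S t) := by
      intro x
      rw [intervalIntegral.integral_eq_sub_of_hasDerivAt (fun t _ => key t)
        (((hg.continuous).sub
          (continuous_finset_sum _ fun i _ =>
            continuous_const.mul (continuous_pow i))).intervalIntegrable 0 x)]
      simp [hF0]
    have hxabs : |x| ≤ 1 := abs_le.mpr hx
    calc |f x - ∑ i ∈ Finset.range (n+2), c i * x ^ i|
        = ‖∫ t in (0:ℝ)..x, (g t - S t)‖ := by rw [hint]; rfl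
      _ ≤ (M * |x| ^ (n+1)) * |x - 0| := by
          apply intervalIntegral.norm_integral_le_of_norm_le_const
          intro t ht
          have htx : |t| ≤ |x| := weno_abs_le_of_uIoc ht
          have htI : t ∈ Set.Icc (-1:ℝ) 1 := abs_le.mp (htx.trans hxabs)
          calc ‖g t - S t‖ ≤ M * |t| ^ (n+1) := ih g hg M hMg t htI
            _ ≤ M * |x| ^ (n+1) := by
                apply mul_le_mul_of_nonneg_left _ hM0
                exact pow_le_pow_left₀ (abs_nonneg _) htx _
      _ = M * |x| ^ (n+2) := by rw [sub_zero]; ring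

private lemma weno_poly_antideriv (p : ℝ[X]) :
    ∃ F : ℝ[X], F.derivative = p ∧ F.natDegree ≤ p.natDegree + 1 := by
  refine ⟨p.sum fun i a => C (a / (i+1)) * X ^ (i+1), ?_, ?_⟩
  · rw [Polynomial.sum_def, map_sum]
    have : ∀ i ∈ p.support, derivative (C (p.coeff i / (i+1)) * X ^ (i+1))
        = C (p.coeff i) * X ^ i := by
      intro i _
      rw [derivative_C_mul_X_pow]
      have h1 : ((i:ℝ)+1) ≠ 0 := by positivity
      congr 1
      congr 1
      push_cast
      field_simp
    rw [Finset.sum_congr rfl this]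
    conv_rhs => rw [← Polynomial.sum_C_mul_X_pow_eq p]
    rw [Polynomial.sum_def]
  · apply Polynomial.natDegree_sum_le_of_forall_le
    intro i hi
    refine le_trans (natDegree_C_mul_le _ _) ?_
    rw [natDegree_X_pow]
    exact Nat.succ_le_succ (Polynomial.le_natDegree_of_mem_supp i hi)

private lemma weno_integral_poly_eval (p : ℝ[X]) (F : ℝ[X]) (hF : F.derivative = p) (a b : ℝ) :
    ∫ x in a..b, p.eval x = F.eval b - F.eval a := by
  apply intervalIntegral.integral_eq_sub_of_hasDerivAt
  · intro x _
    have := F.hasDerivAt x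
    rwa [hF] at this
  · exact (p.continuous_aeval).intervalIntegrable a b

private lemma weno_avg_inj (q : ℕ) (j0 : ℤ) (p : ℝ[X]) (hdeg : p.natDegree ≤ q)
    (hz : ∀ i : Fin (q+1), (∫ x in ((j0:ℝ)+i-1/2)..((j0:ℝ)+i+1/2), p.eval x) = 0) :
    p = 0 := by
  obtain ⟨F, hF, hFdeg⟩ := weno_poly_antideriv p
  set φ : ℕ → ℝ := fun i => F.eval ((j0:ℝ) + i - 1/2) with hφ
  have hstep : ∀ i : ℕ, i ≤ q → φ (i+1) = φ i := by
    intro i hi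
    have h0 := hz ⟨i, Nat.lt_succ_of_le hi⟩
    rw [weno_integral_poly_eval p F hF] at h0
    have he : ((j0:ℝ) + i + 1/2) = ((j0:ℝ) + (i+1:ℕ) - 1/2) := by push_cast; ring
    simp only [hφ]
    push_cast
    push_cast [he] at h0
    linarith
  have hconst : ∀ i : ℕ, i ≤ q+1 → φ i = φ 0 := by
    intro i
    induction i with
    | zero => intro _; rfl
    | succ k ih => intro hk; rw [hstep k (Nat.lt_succ_iff.mp hk), ih (le_of_lt hk)]
  have hG : F - C (φ 0) = 0 := by
    apply Polynomial.eq_zero_of_natDegree_lt_card_of_eval_eq_zero _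
      (f := fun i : Fin (q+2) => ((j0:ℝ) + i - 1/2))
    · intro a b hab
      have : (a:ℝ) = b := by
        field_simp at hab
        linarith
      exact Fin.ext (by exact_mod_cast this)
    · intro i
      simp only [eval_sub, eval_C]
      rw [show F.eval ((j0:ℝ) + i - 1/2) = φ i from rfl, hconst i (Nat.lt_succ_iff.mp i.2)]
      ring
    · rw [Fintype.card_fin]
      exact lt_of_le_of_lt (le_trans (natDegree_sub_le _ _)
        (by simp [hFdeg, le_trans hFdeg (Nat.succ_le_succ hdeg)])) (Nat.lt_succ_self _)
  have : F = C (φ 0) := by linear_combination (norm := ring_nf) hG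
  rw [← hF, this]
  simp

private lemma weno_recon_bound (q : ℕ) (j0 : ℤ) :
    ∃ C1 > 0, ∀ (p : ℝ[X]), p.natDegree ≤ q → ∀ ε : ℝ, 0 ≤ ε →
      (∀ i : Fin (q+1), |∫ x in ((j0:ℝ)+i-1/2)..((j0:ℝ)+i+1/2), p.eval x| ≤ ε) →
      ∀ y ∈ Set.Icc (-(1:ℝ)/2) (1/2), |p.eval y| ≤ C1 * ε := by
  classical
  have hmem : ∀ (p : ℝ[X]), p.natDegree ≤ q → p ∈ degreeLT ℝ (q+1) := by
    intro p hp
    rw [Polynomial.mem_degreeLT]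
    calc p.degree ≤ (p.natDegree : WithBot ℕ) := Polynomial.degree_le_natDegree
      _ < ((q+1 : ℕ) : WithBot ℕ) := by exact_mod_cast Nat.lt_succ_of_le hp
  have hmem' : ∀ p : ℝ[X], p ∈ degreeLT ℝ (q+1) → p.natDegree ≤ q := by
    intro p hp
    rw [Polynomial.mem_degreeLT] at hp
    rcases eq_or_ne p 0 with rfl | h0
    · simp
    · have := (Polynomial.natDegree_lt_iff_degree_lt h0).mpr hp
      omega
  have hII : ∀ i : Fin (q+1), ∃ I : ℝ[X] →ₗ[ℝ] ℝ,
      ∀ p : ℝ[X], I p = ∫ x in ((j0:ℝ)+i-1/2)..((j0:ℝ)+i+1/2), p.eval x := by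
    intro i
    refine ⟨⟨⟨fun p => ∫ x in ((j0:ℝ)+i-1/2)..((j0:ℝ)+i+1/2), p.eval x, ?_⟩, ?_⟩, fun p => rfl⟩
    · intro p r
      simp only [eval_add]
      exact intervalIntegral.integral_add ((p.continuous_aeval).intervalIntegrable _ _)
        ((r.continuous_aeval).intervalIntegrable _ _)
    · intro c p
      simp only [eval_smul, smul_eq_mul, RingHom.id_apply]
      exact intervalIntegral.integral_const_mul _ _
  choose I hI using hII
  let A : degreeLT ℝ (q+1) →ₗ[ℝ] (Fin (q+1) → ℝ) :=
    LinearMap.pi (fun i => (I i).comp (degreeLT ℝ (q+1)).subtype)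
  haveI : FiniteDimensional ℝ (degreeLT ℝ (q+1)) :=
    Module.Finite.equiv (degreeLTEquiv ℝ (q+1)).symm
  have hinj : Function.Injective A := by
    rw [← LinearMap.ker_eq_bot, LinearMap.ker_eq_bot']
    intro ⟨p, hp⟩ hAp
    have hz : ∀ i : Fin (q+1), (∫ x in ((j0:ℝ)+i-1/2)..((j0:ℝ)+i+1/2), p.eval x) = 0 := by
      intro i
      have := congrFun hAp i
      simpa [A, hI] using this
    have := weno_avg_inj q j0 p (hmem' p hp) hz
    exact Subtype.ext this
  have hrank : Module.finrank ℝ (degreeLT ℝ (q+1)) = Module.finrank ℝ (Fin (q+1) → ℝ) := by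
    rw [(degreeLTEquiv ℝ (q+1)).finrank_eq]
  let E := A.linearEquivOfInjective hinj hrank
  have hE : ∀ p, E p = A p := fun p => rfl
  let B : (Fin (q+1) → ℝ) →L[ℝ] (Fin (q+1) → ℝ) :=
    LinearMap.toContinuousLinearMap
      ((degreeLTEquiv ℝ (q+1)).toLinearMap ∘ₗ E.symm.toLinearMap)
  refine ⟨(q+1) * ‖B‖ + 1, by positivity, ?_⟩
  intro p hp ε hε hbound y hy
  set pp : degreeLT ℝ (q+1) := ⟨p, hmem p hp⟩ with hpp
  set v : Fin (q+1) → ℝ := A pp with hv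
  have hsymm : E.symm v = pp := by rw [hv, ← hE]; exact E.symm_apply_apply pp
  have hcoeff : ∀ i : Fin (q+1), p.coeff i = B v i := by
    intro i
    have : degreeLTEquiv ℝ (q+1) pp i = B v i := by
      simp only [B, LinearMap.coe_toContinuousLinearMap', LinearMap.coe_comp,
        Function.comp_apply, LinearEquiv.coe_coe, hsymm]
    exact this.symm ▸ rfl
  have hvnorm : ‖v‖ ≤ ε := by
    rw [pi_norm_le_iff_of_nonneg hε]
    intro i
    rw [Real.norm_eq_abs]
    have : v i = ∫ x in ((j0:ℝ)+i-1/2)..((j0:ℝ)+i+1/2), p.eval x := by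
      simp [hv, A, hI]; rfl
    rw [this]
    exact hbound i
  have hBv : ‖B v‖ ≤ ‖B‖ * ε :=
    le_trans (B.le_opNorm v) (mul_le_mul_of_nonneg_left hvnorm (norm_nonneg _))
  have hgoal : |p.eval y| ≤ (q+1) * ‖B v‖ := by
    rw [Polynomial.eval_eq_sum_range' (Nat.lt_succ_of_le hp)]
    calc |∑ i ∈ Finset.range (q+1), p.coeff i * y ^ i|
        ≤ ∑ i ∈ Finset.range (q+1), |p.coeff i * y ^ i| := Finset.abs_sum_le_sum_abs _ _
      _ ≤ ∑ i ∈ Finset.range (q+1), ‖B v‖ := by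
          apply Finset.sum_le_sum
          intro i hi
          rw [abs_mul]
          have h1 : |p.coeff i| ≤ ‖B v‖ := by
            rw [hcoeff ⟨i, Finset.mem_range.mp hi⟩, ← Real.norm_eq_abs]
            exact norm_le_pi_norm (B v) _
          have h2 : |y ^ i| ≤ 1 := by
            rw [abs_pow]
            apply pow_le_one₀ (abs_nonneg _)
            rw [abs_le]
            constructor <;> [linarith [hy.1]; linarith [hy.2]]
          calc |p.coeff i| * |y ^ i| ≤ |p.coeff i| * 1 :=
                mul_le_mul_of_nonneg_left h2 (abs_nonneg _)
            _ = |p.coeff i| := mul_one _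
            _ ≤ ‖B v‖ := h1
      _ = (q+1) * ‖B v‖ := by rw [Finset.sum_const, Finset.card_range]; push_cast; ring
  calc |p.eval y| ≤ (q+1) * ‖B v‖ := hgoal
    _ ≤ (q+1) * (‖B‖ * ε) := by
        apply mul_le_mul_of_nonneg_left hBv (by positivity)
    _ ≤ ((q+1) * ‖B‖ + 1) * ε := by nlinarith [norm_nonneg B]

private lemma weno_taylor_est (q : ℕ) (u : ℝ → ℝ) (hu : ContDiff ℝ (⊤:ℕ∞) u) (M₀ : ℝ)
    (hM₀ : ∀ t ∈ Set.Icc (-1:ℝ) 1, |iteratedDeriv (q+1) u t| ≤ M₀)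
    (c : ℝ) (hc : 0 < c) (hc1 : c ≤ 1) :
    ∀ x ∈ Set.Icc (-c) c,
      |u x - (∑ i ∈ Finset.range (q+1),
        Polynomial.C (iteratedDeriv i u 0 / (i.factorial : ℝ)) * X^i).eval x|
        ≤ M₀ * c^(q+1) := by
  intro x hx
  have hc0 : c ≠ 0 := ne_of_gt hc
  have hM₀0 : 0 ≤ M₀ := le_trans (abs_nonneg _) (hM₀ 0 (by norm_num))
  set w : ℝ → ℝ := fun y => u (c*y) with hw
  have hwc : ContDiff ℝ (⊤:ℕ∞) w := hu.comp (contDiff_const.mul contDiff_id)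
  have hd : ∀ i : ℕ, iteratedDeriv i w = fun t => c^i * iteratedDeriv i u (c*t) :=
    fun i => iteratedDeriv_comp_const_mul (hu.of_le (by exact_mod_cast le_top)) c
  have hbd : ∀ t ∈ Set.Icc (-1:ℝ) 1, |iteratedDeriv (q+1) w t| ≤ c^(q+1) * M₀ := by
    intro t ht
    rw [hd (q+1)]
    rw [abs_mul, abs_of_pos (pow_pos hc _)]
    apply mul_le_mul_of_nonneg_left _ (le_of_lt (pow_pos hc _))
    apply hM₀
    have h1 : |c * t| ≤ c := by
      rw [abs_mul, abs_of_pos hc]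
      have := abs_le.mpr ht
      calc c * |t| ≤ c * 1 := mul_le_mul_of_nonneg_left this (le_of_lt hc)
        _ = c := mul_one c
    exact abs_le.mp (h1.trans hc1)
  set y : ℝ := x / c with hy
  have hyI : y ∈ Set.Icc (-1:ℝ) 1 := by
    rw [Set.mem_Icc, ← abs_le, hy, abs_div, abs_of_pos hc, div_le_one hc]
    exact abs_le.mpr hx
  have := weno_taylor_bound q w hwc (c^(q+1) * M₀) hbd y hyI
  have hwy : w y = u x := by rw [hw]; simp only []; rw [hy, mul_div_cancel₀ x hc0]
  have hsum : ∑ i ∈ Finset.range (q+1), iteratedDeriv i w 0 / (i.factorial : ℝ) * y ^ i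
      = (∑ i ∈ Finset.range (q+1),
        Polynomial.C (iteratedDeriv i u 0 / (i.factorial : ℝ)) * X^i).eval x := by
    rw [Polynomial.eval_finset_sum]
    apply Finset.sum_congr rfl
    intro i _
    rw [Polynomial.eval_mul, Polynomial.eval_C, Polynomial.eval_pow, Polynomial.eval_X,
      hd i]
    simp only [mul_zero]
    rw [hy, div_pow]
    field_simp
  rw [hwy, hsum] at this
  refine le_trans this ?_
  have h1 : |y| ^ (q+1) ≤ 1 := pow_le_one₀ (abs_nonneg _) (abs_le.mpr hyI)
  calc c^(q+1) * M₀ * |y|^(q+1) ≤ c^(q+1) * M₀ * 1 := by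
        apply mul_le_mul_of_nonneg_left h1 (by positivity)
    _ = M₀ * c^(q+1) := by ring

end WenoAux


set_option maxHeartbeats 1000000 in
/-- the cell-average interpolant of a smooth function is accurate of order
`q+1` on the central cell: `sup_{x ∈ [-h/2,h/2]} |P^h(x) - u(x)| = O(h^{q+1})`. -/
theorem interpolation_accuracy_central_cell (q : ℕ) (j0 : ℤ)
    (hj0 : j0 ≤ 0) (hj0' : 0 ≤ j0 + q)
    (u : ℝ → ℝ) (hu : ContDiff ℝ (⊤ : ℕ∞) u)
    (P : ℝ → Polynomial ℝ)
    (hP : ∀ h : ℝ, 0 < h → (P h).natDegree ≤ q ∧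
      ∀ j ∈ Finset.Icc j0 (j0 + q), cellAvg h j (fun x => (P h).eval x) = cellAvg h j u) :
    ∃ C > 0, ∃ h0 > 0, ∀ h : ℝ, 0 < h → h < h0 →
      ∀ x ∈ Set.Icc (-h/2) (h/2), |(P h).eval x - u x| ≤ C * h ^ (q + 1) := by
  classical
  have hu' : ContDiff ℝ (⊤:ℕ∞) u := hu.of_le (by simp)
  obtain ⟨M, hM⟩ := (isCompact_Icc (a := (-1:ℝ)) (b := 1)).exists_bound_of_continuousOn
    ((hu'.continuous_iteratedDeriv (q+1) (by exact_mod_cast le_top)).continuousOn)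
  set M₀ : ℝ := max M 0 with hM₀def
  have hM₀0 : 0 ≤ M₀ := le_max_right _ _
  have hM₀ : ∀ t ∈ Set.Icc (-1:ℝ) 1, |iteratedDeriv (q+1) u t| ≤ M₀ := fun t ht =>
    le_trans (by simpa using hM t ht) (le_max_left _ _)
  set K : ℝ := (q:ℝ) + |(j0:ℝ)| + 1 with hKdef
  have hK1 : 1 ≤ K := by
    have h1 : (0:ℝ) ≤ (q:ℝ) := Nat.cast_nonneg q
    have h2 : (0:ℝ) ≤ |(j0:ℝ)| := abs_nonneg _
    simp only [hKdef]; linarith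
  have hKpos : (0:ℝ) < K := lt_of_lt_of_le one_pos hK1
  set T : Polynomial ℝ := ∑ i ∈ Finset.range (q+1),
    Polynomial.C (iteratedDeriv i u 0 / (i.factorial : ℝ)) * X^i with hTdef
  have hTdeg : T.natDegree ≤ q := by
    apply Polynomial.natDegree_sum_le_of_forall_le
    intro i hi
    refine le_trans (natDegree_C_mul_le _ _) ?_
    rw [natDegree_X_pow]
    exact Nat.lt_succ_iff.mp (Finset.mem_range.mp hi)
  obtain ⟨C1, hC1pos, hC1⟩ := weno_recon_bound q j0
  refine ⟨(C1 + 1) * (M₀ * K^(q+1)) + 1, by positivity, 1/K, by positivity, ?_⟩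
  intro h hh hhK x hxmem
  have hh0 : h ≠ 0 := ne_of_gt hh
  have hKh : 0 < K * h := mul_pos hKpos hh
  have hKh1 : K * h ≤ 1 := by
    have := (lt_div_iff₀ hKpos).mp hhK
    nlinarith
  have hTay : ∀ z ∈ Set.Icc (-(K*h)) (K*h), |u z - T.eval z| ≤ M₀ * (K*h)^(q+1) :=
    weno_taylor_est q u hu' M₀ hM₀ (K*h) hKh hKh1
  set Mb : ℝ := M₀ * (K*h)^(q+1) with hMbdef
  have hMb0 : 0 ≤ Mb := by positivity
  set D : Polynomial ℝ := P h - T with hDdef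
  have hDdeg : D.natDegree ≤ q :=
    le_trans (Polynomial.natDegree_sub_le _ _) (max_le (hP h hh).1 hTdeg)
  -- cells within [-Kh, Kh]
  have hcell : ∀ j : ℤ, j0 ≤ j → j ≤ j0 + q →
      ∀ t, ((j:ℝ) - 1/2) * h ≤ t → t ≤ ((j:ℝ) + 1/2) * h → t ∈ Set.Icc (-(K*h)) (K*h) := by
    intro j hj1 hj2 t ht1 ht2
    have hjr : |(j:ℝ)| ≤ K - 1 := by
      rw [abs_le]
      have e1 : ((j0:ℤ):ℝ) ≤ (j:ℝ) := by exact_mod_cast hj1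
      have e2 : (j:ℝ) ≤ ((j0:ℤ):ℝ) + q := by exact_mod_cast hj2
      have e3 : -|(j0:ℝ)| ≤ ((j0:ℤ):ℝ) := neg_abs_le _
      have e4 : ((j0:ℤ):ℝ) ≤ 0 := by exact_mod_cast hj0
      constructor
      · simp only [hKdef]; push_cast at e1 e3 ⊢; linarith [Nat.cast_nonneg (α := ℝ) q]
      · simp only [hKdef]; push_cast at e2 e4 ⊢; linarith [abs_nonneg ((j0:ℝ))]
    have h5 : -(K*h) ≤ ((j:ℝ) - 1/2) * h := by nlinarith [abs_le.mp hjr]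
    have h6 : ((j:ℝ) + 1/2) * h ≤ K*h := by nlinarith [abs_le.mp hjr]
    exact ⟨le_trans h5 ht1, le_trans ht2 h6⟩
  -- the average of u - T over any admissible cell is at most Mb
  have havgUT : ∀ j : ℤ, j0 ≤ j → j ≤ j0 + q →
      |cellAvg h j u - cellAvg h j (fun x => T.eval x)| ≤ Mb := by
    intro j hj1 hj2
    have hab : ((j:ℝ) - 1/2) * h ≤ ((j:ℝ) + 1/2) * h := by nlinarith
    have hsub : cellAvg h j u - cellAvg h j (fun x => T.eval x)
        = (1/h) * ∫ x in (((j:ℝ) - 1/2) * h)..(((j:ℝ) + 1/2) * h), (u x - T.eval x) := by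
      rw [cellAvg, cellAvg, ← mul_sub, intervalIntegral.integral_sub
        ((hu'.continuous).intervalIntegrable _ _)
        ((T.continuous).intervalIntegrable _ _)]
    rw [hsub, abs_mul]
    have hInt : |∫ x in (((j:ℝ) - 1/2) * h)..(((j:ℝ) + 1/2) * h), (u x - T.eval x)|
        ≤ Mb * |(((j:ℝ) + 1/2) * h) - (((j:ℝ) - 1/2) * h)| := by
      rw [← Real.norm_eq_abs (∫ _ in _.._, _)]
      apply intervalIntegral.norm_integral_le_of_norm_le_const
      intro t ht
      rw [Set.uIoc_of_le hab] at ht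
      have htI := hcell j hj1 hj2 t (le_of_lt ht.1) ht.2
      exact hTay t htI
    have he : (((j:ℝ) + 1/2) * h) - (((j:ℝ) - 1/2) * h) = h := by ring
    rw [he, abs_of_pos hh] at hInt
    calc |1/h| * |∫ x in (((j:ℝ) - 1/2) * h)..(((j:ℝ) + 1/2) * h), (u x - T.eval x)|
        ≤ |1/h| * (Mb * h) := mul_le_mul_of_nonneg_left hInt (abs_nonneg _)
      _ = Mb := by rw [abs_of_pos (by positivity : (0:ℝ) < 1/h)]; field_simp
  -- scaled polynomial
  set Ds : Polynomial ℝ := D.comp (Polynomial.C h * X) with hDsdef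
  have hDsdeg : Ds.natDegree ≤ q := by
    rw [hDsdef, Polynomial.natDegree_comp]
    have : (Polynomial.C h * X).natDegree = 1 := by
      rw [Polynomial.natDegree_C_mul_X h hh0]
    rw [this, mul_one]
    exact hDdeg
  have hDseval : ∀ y : ℝ, Ds.eval y = D.eval (h * y) := by
    intro y
    rw [hDsdef, Polynomial.eval_comp, Polynomial.eval_mul, Polynomial.eval_C,
      Polynomial.eval_X]
  have hDsavg : ∀ i : Fin (q+1),
      |∫ yy in ((j0:ℝ)+i-1/2)..((j0:ℝ)+i+1/2), Ds.eval yy| ≤ Mb := by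
    intro i
    set j : ℤ := j0 + (i:ℕ) with hjdef
    have hj1 : j0 ≤ j := by simp [hjdef]
    have hj2 : j ≤ j0 + q := by
      simp only [hjdef]
      have := Nat.lt_succ_iff.mp i.2; omega
    have hjr : ((j:ℤ):ℝ) = (j0:ℝ) + (i:ℕ) := by push_cast [hjdef]; ring
    have hcomp : ∫ yy in ((j0:ℝ)+i-1/2)..((j0:ℝ)+i+1/2), Ds.eval yy
        = cellAvg h j (fun x => D.eval x) := by
      have : ∀ yy, Ds.eval yy = D.eval (h * yy) := hDseval
      rw [intervalIntegral.integral_congr (g := fun yy => D.eval (h * yy))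
        (fun yy _ => this yy)]
      rw [intervalIntegral.integral_comp_mul_left (fun x => D.eval x) hh0]
      rw [cellAvg, hjr]
      rw [smul_eq_mul]
      congr 1
      · rw [one_div]
      · congr 1 <;> ring
    rw [hcomp]
    have hsplit : cellAvg h j (fun x => D.eval x)
        = cellAvg h j (fun x => (P h).eval x) - cellAvg h j (fun x => T.eval x) := by
      rw [cellAvg, cellAvg, cellAvg, ← mul_sub, ← intervalIntegral.integral_sub
        (((P h).continuous).intervalIntegrable _ _)
        ((T.continuous).intervalIntegrable _ _)]
      simp only [hDdef, Polynomial.eval_sub]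
    rw [hsplit, (hP h hh).2 j (Finset.mem_Icc.mpr ⟨hj1, hj2⟩)]
    exact havgUT j hj1 hj2
  -- apply the reconstruction bound
  have hDb := hC1 Ds hDsdeg Mb hMb0 hDsavg
  -- conclude
  set y : ℝ := x / h with hydef
  have hyI : y ∈ Set.Icc (-(1:ℝ)/2) (1/2) := by
    constructor
    · rw [hydef, le_div_iff₀ hh]
      have := hxmem.1; linarith
    · rw [hydef, div_le_iff₀ hh]
      have := hxmem.2; linarith
  have hDx : |D.eval x| ≤ C1 * Mb := by
    have := hDb y hyI
    rwa [hDseval y, hydef, mul_div_cancel₀ x hh0] at this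
  have hxKh : x ∈ Set.Icc (-(K*h)) (K*h) := by
    have h1 := hxmem.1
    have h2 := hxmem.2
    constructor <;> nlinarith
  have hTx : |u x - T.eval x| ≤ Mb := hTay x hxKh
  have hfinal : |(P h).eval x - u x| ≤ C1 * Mb + Mb := by
    have : (P h).eval x - u x = D.eval x - (u x - T.eval x) := by
      simp only [hDdef, Polynomial.eval_sub]; ring
    rw [this]
    exact le_trans (abs_sub _ _) (add_le_add hDx hTx)
  have hKpow : Mb = M₀ * K^(q+1) * h^(q+1) := by rw [hMbdef, mul_pow]; ring
  calc |(P h).eval x - u x| ≤ C1 * Mb + Mb := hfinal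
    _ = (C1 + 1) * (M₀ * K^(q+1)) * h^(q+1) := by rw [hKpow]; ring
    _ ≤ ((C1 + 1) * (M₀ * K^(q+1)) + 1) * h^(q+1) := by nlinarith [pow_pos hh (q+1)]
end

section
/- Let r ≥ 1 be an integer, let d_0, …, d_r ∈ (0,1) with Σ_{k=0}^{r} d_k = 1, let I_0, …, I_r ≥ 0, let ε > 0, τ ≥ 0 and t ≥ 1. Define the CWENOZ weights α_k^Z = d_k (1 + (τ/(I_k + ε))^t) and ω_k^Z = α_k^Z / Σ_{i=0}^{r} α_i^Z for k = 0, …, r. Then ω_k^Z ∈ (0,1) for every k, Σ_{k=0}^{r} ω_k^Z = 1, and the nonlinear weights deviate from the linear ones by at most |ω_k^Z − d_k| ≤ d_k (τ/ε)^t for every k = 0, …, r. -/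
/-!
Write `α_k = d_k (1 + x_k)` with `x_k = (τ/(I_k+ε))^t ∈ [0, M]`, `M = (τ/ε)^t`. Since `Σ d_i = 1`,
`Σ α_i = 1 + σ` where `σ = Σ d_i x_i` is a convex combination of the `x_i`, so `σ ∈ [0, M]` as well,
and `ω_k - d_k = d_k (x_k - σ) / (1 + σ)`, whose absolute value is at most `d_k M`.
-/

open Finset

section NormalizedWeights

variable {ι : Type*} {s : Finset ι}

theorem div_sum_mem_Ioo {α : ι → ℝ} (hs : 1 < #s) (hα : ∀ i ∈ s, 0 < α i) {k : ι} (hk : k ∈ s) :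
    α k / ∑ i ∈ s, α i ∈ Set.Ioo 0 1 := by
  obtain ⟨j, hj, hjk⟩ := exists_mem_ne hs k
  have hlt : α k < ∑ i ∈ s, α i := single_lt_sum hjk hk hj (hα j hj) fun i hi _ => (hα i hi).le
  exact ⟨div_pos (hα k hk) (sum_pos hα ⟨k, hk⟩), (div_lt_one ((hα k hk).trans hlt)).2 hlt⟩

theorem sum_div_sum_self {α : ι → ℝ} (h : ∑ i ∈ s, α i ≠ 0) :
    ∑ k ∈ s, α k / ∑ i ∈ s, α i = 1 := by
  rw [← sum_div, div_self h]

variable {d x : ι → ℝ} {M : ℝ}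

theorem sum_mul_one_add (hd : ∑ i ∈ s, d i = 1) :
    ∑ i ∈ s, d i * (1 + x i) = 1 + ∑ i ∈ s, d i * x i := by
  simp only [mul_one_add, sum_add_distrib, hd]

theorem abs_mul_one_add_div_sum_sub_le (hd₀ : ∀ i ∈ s, 0 ≤ d i) (hd : ∑ i ∈ s, d i = 1)
    (hx : ∀ i ∈ s, x i ∈ Set.Icc 0 M) {k : ι} (hk : k ∈ s) :
    |d k * (1 + x k) / ∑ i ∈ s, d i * (1 + x i) - d k| ≤ d k * M := by
  obtain ⟨hσ₀, hσM⟩ : ∑ i ∈ s, d i * x i ∈ Set.Icc 0 M := by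
    simpa only [smul_eq_mul] using (convex_Icc 0 M).sum_mem hd₀ hd hx
  rw [sum_mul_one_add hd]
  set σ := ∑ i ∈ s, d i * x i
  have hdev : d k * (1 + x k) / (1 + σ) - d k = d k * (x k - σ) / (1 + σ) := by
    field_simp
    ring
  have hdiff : |x k - σ| ≤ M :=
    abs_sub_le_iff.2 ⟨by linarith [(hx k hk).2], by linarith [(hx k hk).1]⟩
  rw [hdev, abs_div, abs_mul, abs_of_nonneg (hd₀ k hk), abs_of_pos (show 0 < 1 + σ by linarith)]
  calc d k * |x k - σ| / (1 + σ) ≤ d k * |x k - σ| :=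
        div_le_self (mul_nonneg (hd₀ k hk) (abs_nonneg _)) (by linarith)
    _ ≤ d k * M := mul_le_mul_of_nonneg_left hdiff (hd₀ k hk)

end NormalizedWeights

theorem rpow_div_add_mem_Icc {τ I ε t : ℝ} (hτ : 0 ≤ τ) (hI : 0 ≤ I) (hε : 0 < ε) (ht : 0 ≤ t) :
    (τ / (I + ε)) ^ t ∈ Set.Icc 0 ((τ / ε) ^ t) :=
  ⟨by positivity,
    Real.rpow_le_rpow (by positivity) (div_le_div_of_nonneg_left hτ hε (by linarith)) ht⟩

/-- basic properties of the CWENOZ nonlinear weights: they lie in `(0,1)`,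
sum to one, and deviate from the linear coefficients by at most `d_k (τ/ε)^t`. -/
theorem cwenoz_weights_properties (r : ℕ) (hr : 1 ≤ r) (d I : ℕ → ℝ)
    (hd : ∀ k ≤ r, d k ∈ Set.Ioo (0 : ℝ) 1)
    (hdsum : ∑ k ∈ Finset.range (r + 1), d k = 1)
    (hI : ∀ k ≤ r, 0 ≤ I k)
    (ε τ t : ℝ) (hε : 0 < ε) (hτ : 0 ≤ τ) (ht : 1 ≤ t)
    (α ω : ℕ → ℝ)
    (hα : ∀ k ≤ r, α k = d k * (1 + (τ / (I k + ε)) ^ t))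
    (hω : ∀ k ≤ r, ω k = α k / ∑ i ∈ Finset.range (r + 1), α i) :
    (∀ k ≤ r, ω k ∈ Set.Ioo (0 : ℝ) 1) ∧
    (∑ k ∈ Finset.range (r + 1), ω k = 1) ∧
    (∀ k ≤ r, |ω k - d k| ≤ d k * (τ / ε) ^ t) := by
  have hmem : ∀ {k}, k ∈ range (r + 1) ↔ k ≤ r := by simp
  set x : ℕ → ℝ := fun k => (τ / (I k + ε)) ^ t
  have hd₀ : ∀ k ∈ range (r + 1), 0 ≤ d k := fun k hk => (hd k (hmem.1 hk)).1.le
  have hx : ∀ k ∈ range (r + 1), x k ∈ Set.Icc 0 ((τ / ε) ^ t) := fun k hk =>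
    rpow_div_add_mem_Icc hτ (hI k (hmem.1 hk)) hε (by linarith)
  have hαx : ∀ k ∈ range (r + 1), α k = d k * (1 + x k) := fun k hk => hα k (hmem.1 hk)
  have hαpos : ∀ k ∈ range (r + 1), 0 < α k := fun k hk => by
    rw [hαx k hk]
    exact mul_pos (hd k (hmem.1 hk)).1 (by linarith [(hx k hk).1])
  have hcard : 1 < #(range (r + 1)) := by rw [card_range]; omega
  refine ⟨fun k hk => ?_, ?_, fun k hk => ?_⟩
  · rw [hω k hk]
    exact div_sum_mem_Ioo hcard hαpos (hmem.2 hk)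
  · rw [sum_congr rfl fun k hk => hω k (hmem.1 hk)]
    exact sum_div_sum_self (sum_pos hαpos ⟨0, hmem.2 r.zero_le⟩).ne'
  · rw [hω k hk, sum_congr rfl hαx, hαx k (hmem.2 hk)]
    exact abs_mul_one_add_div_sum_sub_le hd₀ hdsum hx (hmem.2 hk)
end

section
/- Let u : ℝ → ℝ be of class C^∞. For each h > 0 let ū_j = (1/h)∫_{Ω_j} u, let P_1^h be the unique polynomial of degree ≤ 1 whose cell averages over Ω_{−1}, Ω_0 equal ū_{−1}, ū_0, and let P_2^h be the unique polynomial of degree ≤ 1 whose cell averages over Ω_0, Ω_1 equal ū_0, ū_1. Then the global smoothness indicator of the third-order CWENOZ scheme (r = 2) satisfies τ^{opt}(h) = |I[P_1^h] − I[P_2^h]| = O(h³) as h → 0⁺. -/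
open Polynomial intervalIntegral

lemma JS_deg_one (h : ℝ) (P : Polynomial ℝ) (hdeg : P.natDegree ≤ 1) :
    JS 1 h P = (P.coeff 1 * h) ^ 2 := by
  have hrep := Polynomial.eq_X_add_C_of_natDegree_le_one hdeg
  unfold JS
  rw [Finset.Icc_self, Finset.sum_singleton, Function.iterate_one]
  conv_lhs => rw [hrep]
  simp [Polynomial.derivative_C, Polynomial.derivative_X, integral_const]
  ring

lemma cellAvg_deg_one (h : ℝ) (hh : h ≠ 0) (j : ℤ) (P : Polynomial ℝ)
    (hdeg : P.natDegree ≤ 1) :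
    cellAvg h j (fun x => P.eval x) = P.coeff 0 + P.coeff 1 * (j * h) := by
  have hrep := Polynomial.eq_X_add_C_of_natDegree_le_one hdeg
  have heval : ∀ x : ℝ, P.eval x = P.coeff 1 * x + P.coeff 0 := by
    intro x; conv_lhs => rw [hrep]
    simp
  unfold cellAvg
  simp only [heval]
  rw [integral_add (Continuous.intervalIntegrable (u := fun x => P.coeff 1 * x) (continuous_const.mul continuous_id') _ _)
    (intervalIntegrable_const), intervalIntegral.integral_const_mul, integral_id, integral_const]
  field_simp
  ring

/-- for the third-order CWENOZ scheme (r = 2), τ^opt = |I[P₁] − I[P₂]| = O(h³). -/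
theorem cwenoz_tau_order_stmt12 (u : ℝ → ℝ) (hu : ContDiff ℝ (⊤ : ℕ∞) u)
    (P : ℕ → ℝ → Polynomial ℝ)
    (hP : ∀ k, 1 ≤ k → k ≤ 2 → ∀ h : ℝ, 0 < h →
      (P k h).natDegree ≤ 1 ∧
      ∀ j ∈ Finset.Icc ((k : ℤ) - 2) ((k : ℤ) - 1),
        cellAvg h j (fun x => (P k h).eval x) = cellAvg h j u) :
    ∃ C > 0, ∃ h0 > 0, ∀ h : ℝ, 0 < h → h < h0 →
      |JS 1 h (P 1 h) - JS 1 h (P 2 h)| ≤ C * h ^ 3 := by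
  -- smoothness facts
  have hu' : ContDiff ℝ (↑(⊤ : ℕ∞)) u := hu.of_le (by simp)
  have hdu : Differentiable ℝ u := (contDiff_infty_iff_deriv.mp hu').1
  have hu1 : ContDiff ℝ (↑(⊤ : ℕ∞)) (deriv u) := (contDiff_infty_iff_deriv.mp hu').2
  have hdu1 : Differentiable ℝ (deriv u) := (contDiff_infty_iff_deriv.mp hu1).1
  have hu2 : ContDiff ℝ (↑(⊤ : ℕ∞)) (deriv (deriv u)) := (contDiff_infty_iff_deriv.mp hu1).2
  -- bounds on the compact set [-2,2]
  obtain ⟨M₁, hM₁⟩ := (isCompact_Icc (a := (-2:ℝ)) (b := 2)).exists_bound_of_continuousOn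
    (hdu1.continuous.continuousOn)
  obtain ⟨M₂, hM₂⟩ := (isCompact_Icc (a := (-2:ℝ)) (b := 2)).exists_bound_of_continuousOn
    (hu2.continuous.continuousOn)
  set K₁ : ℝ := |M₁| + 1 with hK₁def
  set K₂ : ℝ := |M₂| + 1 with hK₂def
  have hK₁pos : 0 < K₁ := by positivity
  have hK₂pos : 0 < K₂ := by positivity
  have hK₁ : ∀ x ∈ Set.Icc (-2:ℝ) 2, |deriv u x| ≤ K₁ := by
    intro x hx
    calc |deriv u x| = ‖deriv u x‖ := rfl
      _ ≤ M₁ := hM₁ x hx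
      _ ≤ K₁ := by rw [hK₁def]; nlinarith [le_abs_self M₁]
  have hK₂ : ∀ x ∈ Set.Icc (-2:ℝ) 2, |deriv (deriv u) x| ≤ K₂ := by
    intro x hx
    calc |deriv (deriv u) x| = ‖deriv (deriv u) x‖ := rfl
      _ ≤ M₂ := hM₂ x hx
      _ ≤ K₂ := by rw [hK₂def]; nlinarith [le_abs_self M₂]
  -- mean value inequality on [-2,2]
  have mvt : ∀ (f : ℝ → ℝ), Differentiable ℝ f → ∀ (K : ℝ),
      (∀ x ∈ Set.Icc (-2:ℝ) 2, |deriv f x| ≤ K) →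
      ∀ x ∈ Set.Icc (-2:ℝ) 2, ∀ y ∈ Set.Icc (-2:ℝ) 2, |f y - f x| ≤ K * |y - x| := by
    intro f hf K hK x hx y hy
    have := (convex_Icc (-2:ℝ) 2).norm_image_sub_le_of_norm_deriv_le
      (f := f) (fun z _ => hf z) (fun z hz => hK z hz) hx hy
    simpa using this
  refine ⟨4 * K₁ * K₂, by positivity, 1, one_pos, ?_⟩
  intro h hpos h1
  have hne : h ≠ 0 := ne_of_gt hpos
  -- integrability facts
  have hcu : Continuous u := hdu.continuous
  have int_u : IntervalIntegrable u MeasureTheory.volume (-h/2) (h/2) :=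
    hcu.intervalIntegrable _ _
  have int_um : IntervalIntegrable (fun x => u (x - h)) MeasureTheory.volume (-h/2) (h/2) :=
    (hcu.comp (continuous_id.sub continuous_const)).intervalIntegrable _ _
  have int_up : IntervalIntegrable (fun x => u (x + h)) MeasureTheory.volume (-h/2) (h/2) :=
    (hcu.comp (continuous_id.add continuous_const)).intervalIntegrable _ _
  -- cell averages as integrals over the central cell
  have e0 : cellAvg h 0 u = (1/h) * ∫ x in (-h/2)..(h/2), u x := by
    unfold cellAvg
    rw [show ((((0:ℤ):ℝ)) - 1/2) * h = -h/2 by push_cast; ring,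
      show ((((0:ℤ):ℝ)) + 1/2) * h = h/2 by push_cast; ring]
  have e1 : cellAvg h (-1) u = (1/h) * ∫ x in (-h/2)..(h/2), u (x - h) := by
    unfold cellAvg
    rw [intervalIntegral.integral_comp_sub_right u h,
      show ((((-1:ℤ)):ℝ) - 1/2) * h = -h/2 - h by push_cast; ring,
      show ((((-1:ℤ)):ℝ) + 1/2) * h = h/2 - h by push_cast; ring]
  have e2 : cellAvg h 1 u = (1/h) * ∫ x in (-h/2)..(h/2), u (x + h) := by
    unfold cellAvg
    rw [intervalIntegral.integral_comp_add_right u h,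
      show ((((1:ℤ)):ℝ) - 1/2) * h = -h/2 + h by push_cast; ring,
      show ((((1:ℤ)):ℝ) + 1/2) * h = h/2 + h by push_cast; ring]
  set A : ℝ := cellAvg h 0 u - cellAvg h (-1) u with hAdef
  set B : ℝ := cellAvg h 1 u - cellAvg h 0 u with hBdef
  -- sum and difference as single integrals
  have hsum : A + B = (1/h) * ∫ x in (-h/2)..(h/2), (u (x + h) - u (x - h)) := by
    rw [hAdef, hBdef, e0, e1, e2, intervalIntegral.integral_sub int_up int_um]
    ring
  have hdiff : A - B = (1/h) * ∫ x in (-h/2)..(h/2), (2 * u x - u (x - h) - u (x + h)) := by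
    rw [hAdef, hBdef, e0, e1, e2]
    have : (∫ x in (-h/2)..(h/2), (2 * u x - u (x - h) - u (x + h))) =
        (∫ x in (-h/2)..(h/2), u x) - (∫ x in (-h/2)..(h/2), u (x - h))
        - ((∫ x in (-h/2)..(h/2), u (x + h)) - (∫ x in (-h/2)..(h/2), u x)) := by
      rw [← intervalIntegral.integral_sub int_u int_um,
        ← intervalIntegral.integral_sub int_up int_u,
        ← intervalIntegral.integral_sub (int_u.sub int_um) (int_up.sub int_u)]
      apply intervalIntegral.integral_congr
      intro x _
      ring
    rw [this]
    ring
  -- membership helper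
  have hmem : ∀ x ∈ Set.uIoc (-h/2) (h/2), ∀ t : ℝ, |t| ≤ h →
      x + t ∈ Set.Icc (-2:ℝ) 2 := by
    intro x hx t ht
    rcases Set.mem_uIoc.mp hx with h' | h'
    · constructor <;> nlinarith [abs_le.mp ht, h'.1, h'.2]
    · constructor <;> nlinarith [abs_le.mp ht, h'.1, h'.2]
  -- estimate for the sum
  have hEsum : |A + B| ≤ 2 * K₁ * h := by
    rw [hsum, abs_mul]
    have hb : ∀ x ∈ Set.uIoc (-h/2) (h/2), ‖u (x + h) - u (x - h)‖ ≤ K₁ * (2 * h) := by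
      intro x hx
      have hx1 : x - h ∈ Set.Icc (-2:ℝ) 2 := by
        have := hmem x hx (-h) (by rw [abs_neg, abs_of_pos hpos])
        simpa [sub_eq_add_neg] using this
      have hx2 : x + h ∈ Set.Icc (-2:ℝ) 2 := hmem x hx h (by rw [abs_of_pos hpos])
      have := mvt u hdu K₁ hK₁ (x - h) hx1 (x + h) hx2
      calc ‖u (x + h) - u (x - h)‖ = |u (x + h) - u (x - h)| := rfl
        _ ≤ K₁ * |x + h - (x - h)| := this
        _ = K₁ * (2 * h) := by
            congr 1
            rw [show x + h - (x - h) = 2 * h by ring, abs_of_pos (by linarith)]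
    have := intervalIntegral.norm_integral_le_of_norm_le_const hb
    have habsh : |h/2 - (-h/2)| = h := by
      rw [show h/2 - (-h/2) = h by ring, abs_of_pos hpos]
    rw [habsh] at this
    have h1h : |1/h| = 1/h := abs_of_pos (by positivity)
    rw [h1h]
    calc (1/h) * |∫ x in (-h/2)..(h/2), (u (x + h) - u (x - h))|
        ≤ (1/h) * (K₁ * (2 * h) * h) := by
          apply mul_le_mul_of_nonneg_left _ (by positivity)
          exact this
      _ = 2 * K₁ * h := by field_simp
  -- estimate for the difference
  have hEdiff : |A - B| ≤ 2 * K₂ * h ^ 2 := by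
    rw [hdiff, abs_mul]
    have hb : ∀ x ∈ Set.uIoc (-h/2) (h/2),
        ‖2 * u x - u (x - h) - u (x + h)‖ ≤ 2 * K₂ * h ^ 2 := by
      intro x hx
      -- second difference via the function w t = u (x+t) + u (x-t)
      set w : ℝ → ℝ := fun t => u (x + t) + u (x - t) with hwdef
      have hw' : ∀ t : ℝ, HasDerivAt w (deriv u (x + t) * 1 + deriv u (x - t) * (-1)) t := by
        intro t
        have h1 : HasDerivAt (fun s => u (x + s)) (deriv u (x + t) * 1) t :=
          HasDerivAt.comp t (hdu (x + t)).hasDerivAt ((hasDerivAt_id t).const_add x)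
        have h2 : HasDerivAt (fun s => u (x - s)) (deriv u (x - t) * (-1)) t := by
          have hin : HasDerivAt (fun s : ℝ => x - s) (-1) t := by
            simpa using (hasDerivAt_id t).const_sub x
          exact HasDerivAt.comp t (hdu (x - t)).hasDerivAt hin
        exact h1.add h2
      have hbound : ∀ t ∈ Set.Icc (0:ℝ) h,
          ‖deriv u (x + t) * 1 + deriv u (x - t) * (-1)‖ ≤ 2 * K₂ * h := by
        intro t ht
        have htabs : |t| ≤ h := by
          rw [abs_of_nonneg ht.1]; exact ht.2
        have hx1 : x - t ∈ Set.Icc (-2:ℝ) 2 := by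
          have := hmem x hx (-t) (by rwa [abs_neg])
          simpa [sub_eq_add_neg] using this
        have hx2 : x + t ∈ Set.Icc (-2:ℝ) 2 := hmem x hx t htabs
        have := mvt (deriv u) hdu1 K₂ hK₂ (x - t) hx1 (x + t) hx2
        have habs : |x + t - (x - t)| = 2 * t := by
          rw [show x + t - (x - t) = 2 * t by ring, abs_of_nonneg (by linarith [ht.1])]
        rw [habs] at this
        calc ‖deriv u (x + t) * 1 + deriv u (x - t) * (-1)‖
            = |deriv u (x + t) - deriv u (x - t)| := by
              rw [Real.norm_eq_abs]; congr 1; ring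
          _ ≤ K₂ * (2 * t) := this
          _ ≤ 2 * K₂ * h := by nlinarith [ht.1, ht.2, hK₂pos]
      have := (convex_Icc (0:ℝ) h).norm_image_sub_le_of_norm_hasDerivWithin_le
        (f' := fun t => deriv u (x + t) * 1 + deriv u (x - t) * (-1))
        (fun t _ => (hw' t).hasDerivWithinAt) hbound
        (Set.left_mem_Icc.mpr (le_of_lt hpos)) (Set.right_mem_Icc.mpr (le_of_lt hpos))
      have hw0 : w 0 = 2 * u x := by simp [hwdef, two_mul]
      have hwh : w h = u (x + h) + u (x - h) := rfl
      have hnorm : ‖w h - w 0‖ ≤ (2 * K₂ * h) * ‖h - 0‖ := this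
      rw [hw0, hwh] at hnorm
      have : ‖2 * u x - u (x - h) - u (x + h)‖ = ‖u (x + h) + u (x - h) - 2 * u x‖ := by
        rw [Real.norm_eq_abs, Real.norm_eq_abs, ← abs_neg]
        congr 1; ring
      rw [this]
      calc ‖u (x + h) + u (x - h) - 2 * u x‖ ≤ (2 * K₂ * h) * ‖h - 0‖ := hnorm
        _ = 2 * K₂ * h ^ 2 := by
            rw [show h - (0:ℝ) = h by ring, Real.norm_eq_abs, abs_of_pos hpos]; ring
    have := intervalIntegral.norm_integral_le_of_norm_le_const hb
    have habsh : |h/2 - (-h/2)| = h := by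
      rw [show h/2 - (-h/2) = h by ring, abs_of_pos hpos]
    rw [habsh] at this
    have h1h : |1/h| = 1/h := abs_of_pos (by positivity)
    rw [h1h]
    calc (1/h) * |∫ x in (-h/2)..(h/2), (2 * u x - u (x - h) - u (x + h))|
        ≤ (1/h) * (2 * K₂ * h ^ 2 * h) := by
          apply mul_le_mul_of_nonneg_left _ (by positivity)
          exact this
      _ = 2 * K₂ * h ^ 2 := by field_simp
  -- identify JS values with squared average differences
  obtain ⟨hdeg1, hav1⟩ := hP 1 le_rfl (by norm_num) h hpos
  obtain ⟨hdeg2, hav2⟩ := hP 2 (by norm_num) le_rfl h hpos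
  have hav1m := hav1 (-1) (by norm_num)
  have hav10 := hav1 0 (by norm_num)
  have hav20 := hav2 0 (by norm_num)
  have hav21 := hav2 1 (by norm_num)
  rw [cellAvg_deg_one h hne _ _ hdeg1] at hav1m hav10
  rw [cellAvg_deg_one h hne _ _ hdeg2] at hav20 hav21
  push_cast at hav1m hav10 hav20 hav21
  have hc1 : (P 1 h).coeff 1 * h = A := by
    rw [hAdef]; linear_combination hav10 - hav1m
  have hc2 : (P 2 h).coeff 1 * h = B := by
    rw [hBdef]; linear_combination hav21 - hav20
  rw [JS_deg_one h _ hdeg1, JS_deg_one h _ hdeg2, hc1, hc2]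
  -- conclude
  have key : |A ^ 2 - B ^ 2| = |A + B| * |A - B| := by
    rw [← abs_mul]; congr 1; ring
  rw [key]
  calc |A + B| * |A - B| ≤ (2 * K₁ * h) * (2 * K₂ * h ^ 2) := by
        apply mul_le_mul hEsum hEdiff (abs_nonneg _) (by positivity)
    _ = 4 * K₁ * K₂ * h ^ 3 := by ring
end

section
/- Let u : ℝ → ℝ be of class C^∞. For each h > 0 let ū_j = (1/h)∫_{Ω_j} u, and for k = 1, 2, 3 let P_k^h be the unique polynomial of degree ≤ 2 whose cell averages over Ω_j equal ū_j for j in the substencil S_k, where S_1 = {−2,−1,0}, S_2 = {−1,0,1}, S_3 = {0,1,2}. Then the global smoothness indicator of the fifth-order CWENOZ scheme (r = 3) satisfies τ(h) = |I[P_1^h] − I[P_3^h]| = O(h⁵) as h → 0⁺. -/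
/- ### Auxiliary machinery -/

/-- Forward-difference operator with step `h`. -/
noncomputable def fdop (h : ℝ) : (ℝ → ℝ) → (ℝ → ℝ) := fun f x => f (x + h) - f x

lemma fdop_iter_bound (h : ℝ) (hh : 0 < h) (n : ℕ) :
    ∀ (f : ℝ → ℝ), ContDiff ℝ (⊤:ℕ∞) f → ∀ (b M : ℝ),
    (∀ y ∈ Set.Icc (-3 : ℝ) b, |iteratedDeriv n f y| ≤ M) →
    ∀ x, -3 ≤ x → x + n * h ≤ b → |(fdop h)^[n] f x| ≤ h ^ n * M := by
  induction n with
  | zero =>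
    intro f hf b M hM x hx1 hx2
    simpa using hM x ⟨hx1, by simpa using hx2⟩
  | succ n ih =>
    intro f hf b M hM x hx1 hx2
    have htr : ContDiff ℝ (⊤:ℕ∞) (fun z : ℝ => f (z + h)) :=
      hf.comp (contDiff_id.add contDiff_const)
    have hg : ContDiff ℝ (⊤:ℕ∞) (fdop h f) := htr.sub hf
    have hFc : ContDiff ℝ (⊤:ℕ∞) (iteratedDeriv n f) := by
      rw [iteratedDeriv_eq_iterate]; exact hf.iterate_deriv n
    have key : ∀ y ∈ Set.Icc (-3:ℝ) (b - h), |iteratedDeriv n (fdop h f) y| ≤ h * M := by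
      intro y hy
      have hrw : iteratedDeriv n (fdop h f) y
          = iteratedDeriv n f (y + h) - iteratedDeriv n f y := by
        have h0 : fdop h f = (fun z => f (z + h)) - f := rfl
        rw [h0, ← iteratedDerivWithin_univ, iteratedDerivWithin_sub (n := n) (Set.mem_univ y)
          uniqueDiffOn_univ (htr.contDiffWithinAt.of_le (by exact_mod_cast le_top))
          (hf.contDiffWithinAt.of_le (by exact_mod_cast le_top)),
          iteratedDerivWithin_univ, iteratedDerivWithin_univ]
        rw [iteratedDeriv_comp_add_const]
      rw [hrw]
      have hmvt := Convex.norm_image_sub_le_of_norm_deriv_le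
        (f := iteratedDeriv n f) (s := Set.Icc (-3:ℝ) b)
        (fun z _ => hFc.differentiable (by simp) z)
        (fun z hz => by
          rw [show deriv (iteratedDeriv n f) = iteratedDeriv (n+1) f from (iteratedDeriv_succ).symm]
          simpa using hM z hz)
        (convex_Icc _ _)
        (x := y) (y := y + h)
        ⟨hy.1, le_trans hy.2 (by linarith)⟩
        ⟨by linarith [hy.1], by linarith [hy.2]⟩
      rw [Real.norm_eq_abs, Real.norm_eq_abs] at hmvt
      calc |iteratedDeriv n f (y + h) - iteratedDeriv n f y| ≤ M * |y + h - y| := hmvt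
        _ = h * M := by rw [show y + h - y = h by ring, abs_of_pos hh]; ring
    rw [Function.iterate_succ_apply]
    have hle := ih (fdop h f) hg (b - h) (h * M) key x hx1
      (by
        have hc : (↑(n+1):ℝ) * h = ↑n * h + h := by push_cast; ring
        linarith [hx2, hc.le, hc.symm.le])
    calc |(fdop h)^[n] (fdop h f) x| ≤ h ^ n * (h * M) := hle
      _ = h ^ (n+1) * M := by ring

lemma fdop_two (h : ℝ) (f : ℝ → ℝ) (x x1 x2 : ℝ)
    (e1 : x1 = x + h) (e2 : x2 = x + 2*h) :
    (fdop h)^[2] f x = f x2 - 2*f x1 + f x := by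
  subst e1 e2
  simp only [Function.iterate_succ_apply', Function.iterate_zero_apply, fdop]
  ring_nf

lemma fdop_three (h : ℝ) (f : ℝ → ℝ) (x x1 x2 x3 : ℝ)
    (e1 : x1 = x + h) (e2 : x2 = x + 2*h) (e3 : x3 = x + 3*h) :
    (fdop h)^[3] f x = f x3 - 3*f x2 + 3*f x1 - f x := by
  subst e1 e2 e3
  simp only [Function.iterate_succ_apply', Function.iterate_zero_apply, fdop]
  ring_nf

lemma fdop_four (h : ℝ) (f : ℝ → ℝ) (x x1 x2 x3 x4 : ℝ)
    (e1 : x1 = x + h) (e2 : x2 = x + 2*h) (e3 : x3 = x + 3*h) (e4 : x4 = x + 4*h) :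
    (fdop h)^[4] f x = f x4 - 4*f x3 + 6*f x2 - 4*f x1 + f x := by
  subst e1 e2 e3 e4
  simp only [Function.iterate_succ_apply', Function.iterate_zero_apply, fdop]
  ring_nf

lemma fdop_five (h : ℝ) (f : ℝ → ℝ) (x x1 x2 x3 x4 x5 : ℝ)
    (e1 : x1 = x + h) (e2 : x2 = x + 2*h) (e3 : x3 = x + 3*h) (e4 : x4 = x + 4*h)
    (e5 : x5 = x + 5*h) :
    (fdop h)^[5] f x = f x5 - 5*f x4 + 10*f x3 - 10*f x2 + 5*f x1 - f x := by
  subst e1 e2 e3 e4 e5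
  simp only [Function.iterate_succ_apply', Function.iterate_zero_apply, fdop]
  ring_nf

lemma integral_quadratic (p q r lo hi : ℝ) :
    ∫ x in lo..hi, (p + q*x + r*x^2) =
      (p*hi + q/2*hi^2 + r/3*hi^3) - (p*lo + q/2*lo^2 + r/3*lo^3) := by
  have hd : ∀ x ∈ Set.uIcc lo hi,
      HasDerivAt (fun x : ℝ => p*x + q/2*x^2 + r/3*x^3) (p + q*x + r*x^2) x := by
    intro x _
    have h1 := (hasDerivAt_id x).const_mul p
    have h2 := (hasDerivAt_pow 2 x).const_mul (q/2)
    have h3 := (hasDerivAt_pow 3 x).const_mul (r/3)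
    refine ((h1.add h2).add h3).congr_deriv ?_
    push_cast; ring
  rw [intervalIntegral.integral_eq_sub_of_hasDerivAt hd]
  exact (Continuous.intervalIntegrable (by continuity) _ _)

lemma eval_eq2 (Q : Polynomial ℝ) (hQ : Q.natDegree ≤ 2) (x : ℝ) :
    Q.eval x = Q.coeff 0 + Q.coeff 1 * x + Q.coeff 2 * x^2 := by
  rw [Polynomial.eval_eq_sum_range' (lt_of_le_of_lt hQ (by norm_num : (2:ℕ) < 3))]
  simp [Finset.sum_range_succ]

lemma eval_d1 (Q : Polynomial ℝ) (hQ : Q.natDegree ≤ 2) (x : ℝ) :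
    (Polynomial.derivative Q).eval x = Q.coeff 1 + 2 * Q.coeff 2 * x := by
  have h1 : (Polynomial.derivative Q).natDegree < 2 :=
    lt_of_le_of_lt (Polynomial.natDegree_derivative_le Q) (by omega)
  rw [Polynomial.eval_eq_sum_range' h1]
  simp only [Finset.sum_range_succ, Finset.sum_range_zero, Polynomial.coeff_derivative]
  push_cast; ring

lemma eval_d2 (Q : Polynomial ℝ) (hQ : Q.natDegree ≤ 2) (x : ℝ) :
    (Polynomial.derivative (Polynomial.derivative Q)).eval x = 2 * Q.coeff 2 := by
  have h0 : (Polynomial.derivative Q).natDegree ≤ 1 :=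
    le_trans (Polynomial.natDegree_derivative_le Q) (by omega)
  have h1 : (Polynomial.derivative (Polynomial.derivative Q)).natDegree < 1 :=
    lt_of_le_of_lt (Polynomial.natDegree_derivative_le _) (by omega)
  rw [Polynomial.eval_eq_sum_range' h1]
  simp only [Finset.sum_range_succ, Finset.sum_range_zero, Polynomial.coeff_derivative]
  push_cast; ring

lemma JS_formula (h : ℝ) (Q : Polynomial ℝ) (hQ : Q.natDegree ≤ 2) :
    JS 2 h Q = (Q.coeff 1 * h)^2 + 13/3 * (Q.coeff 2 * h^2)^2 := by
  have hIcc : (Finset.Icc 1 2 : Finset ℕ) = {1, 2} := rfl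
  rw [JS, hIcc, Finset.sum_insert (by decide), Finset.sum_singleton]
  have e1 : Set.EqOn (fun x : ℝ => (Polynomial.eval x ((⇑Polynomial.derivative)^[1] Q))^2)
      (fun x : ℝ => Q.coeff 1^2 + (4*Q.coeff 1*Q.coeff 2)*x + (4*Q.coeff 2^2)*x^2)
      (Set.uIcc (-h/2) (h/2)) := by
    intro x _; simp only [Function.iterate_one]; rw [eval_d1 Q hQ]; ring
  have e2 : Set.EqOn (fun x : ℝ => (Polynomial.eval x ((⇑Polynomial.derivative)^[2] Q))^2)
      (fun x : ℝ => 4*Q.coeff 2^2 + 0*x + 0*x^2) (Set.uIcc (-h/2) (h/2)) := by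
    intro x _
    show (Polynomial.eval x (Polynomial.derivative (Polynomial.derivative Q)))^2 = _
    rw [eval_d2 Q hQ]; ring
  rw [intervalIntegral.integral_congr e1, intervalIntegral.integral_congr e2,
    integral_quadratic, integral_quadratic]
  norm_num
  ring

lemma cell_eq (h : ℝ) (hh : 0 < h) (u : ℝ → ℝ) (hu : Continuous u) (V : ℝ → ℝ)
    (hV : ∀ x, V x = ∫ t in (0:ℝ)..x, u t)
    (j : ℤ) (jr lo hi : ℝ) (hjr : (j:ℝ) = jr) (hlo : ((j:ℝ) - 1/2)*h = lo)
    (hhi : ((j:ℝ) + 1/2)*h = hi)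
    (Q : Polynomial ℝ) (hQ : Q.natDegree ≤ 2)
    (hEq : cellAvg h j (fun x => Q.eval x) = cellAvg h j u) :
    Q.coeff 0 * h + Q.coeff 1 * jr * h^2 + Q.coeff 2 * (jr^2 + 1/12) * h^3 = V hi - V lo := by
  subst hjr hlo hhi
  have hne : h ≠ 0 := ne_of_gt hh
  have h2 := congrArg (fun z => h * z) hEq
  simp only [cellAvg] at h2
  rw [intervalIntegral.integral_congr
      (g := fun x => Q.coeff 0 + Q.coeff 1 * x + Q.coeff 2 * x^2)
      (fun x _ => eval_eq2 Q hQ x), integral_quadratic] at h2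
  rw [show ∀ Z : ℝ, h * ((1/h) * Z) = Z from fun Z => by field_simp,
      show ∀ Z : ℝ, h * ((1/h) * Z) = Z from fun Z => by field_simp] at h2
  rw [hV, hV,
    intervalIntegral.integral_interval_sub_left (hu.intervalIntegrable _ _)
      (hu.intervalIntegrable _ _)]
  linear_combination h2

lemma V_contDiff (u : ℝ → ℝ) (hu : ContDiff ℝ (⊤:ℕ∞) u) :
    ContDiff ℝ (⊤:ℕ∞) (fun x => ∫ t in (0:ℝ)..x, u t) := by
  rw [contDiff_infty_iff_deriv]
  have hd : ∀ x : ℝ, HasDerivAt (fun x => ∫ t in (0:ℝ)..x, u t) (u x) x := fun x =>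
    intervalIntegral.integral_hasDerivAt_right (hu.continuous.intervalIntegrable _ _)
      (hu.continuous.stronglyMeasurableAtFilter _ _) hu.continuous.continuousAt
  refine ⟨fun x => (hd x).differentiableAt, ?_⟩
  have : deriv (fun x => ∫ t in (0:ℝ)..x, u t) = u := funext fun x => (hd x).deriv
  rw [this]; exact hu

lemma get_bound (V : ℝ → ℝ) (hV : ContDiff ℝ (⊤:ℕ∞) V) (k : ℕ) :
    ∃ M : ℝ, 0 ≤ M ∧ ∀ y ∈ Set.Icc (-3:ℝ) 3, |iteratedDeriv k V y| ≤ M := by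
  have hc : ContinuousOn (iteratedDeriv k V) (Set.Icc (-3:ℝ) 3) := by
    have hcd : ContDiff ℝ (⊤:ℕ∞) (iteratedDeriv k V) := by
      rw [iteratedDeriv_eq_iterate]; exact hV.iterate_deriv k
    exact hcd.continuous.continuousOn
  obtain ⟨C, hC⟩ := (isCompact_Icc).exists_bound_of_continuousOn hc
  exact ⟨max C 0, le_max_right _ _,
    fun y hy => le_trans (by simpa using hC y hy) (le_max_left _ _)⟩

lemma key_algebra (h a1 b1 c1 a3 b3 c3 A B C D E F : ℝ)
    (e1 : a1*h + b1*(-2)*h^2 + c1*((-2:ℝ)^2 + 1/12)*h^3 = B - A)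
    (e2 : a1*h + b1*(-1)*h^2 + c1*((-1:ℝ)^2 + 1/12)*h^3 = C - B)
    (e3 : a1*h + b1*0*h^2 + c1*((0:ℝ)^2 + 1/12)*h^3 = D - C)
    (e4 : a3*h + b3*0*h^2 + c3*((0:ℝ)^2 + 1/12)*h^3 = D - C)
    (e5 : a3*h + b3*1*h^2 + c3*((1:ℝ)^2 + 1/12)*h^3 = E - D)
    (e6 : a3*h + b3*2*h^2 + c3*((2:ℝ)^2 + 1/12)*h^3 = F - E) :
    2*h*(b1*h - b3*h) = F - 5*E + 10*D - 10*C + 5*B - A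
    ∧ 2*h*(b1*h + b3*h) = -F + 5*E - 4*D - 4*C + 5*B - A
    ∧ 2*h*(c1*h^2 - c3*h^2) = -F + 3*E - 2*D - 2*C + 3*B - A
    ∧ 2*h*(c1*h^2 + c3*h^2) = F - 3*E + 4*D - 4*C + 3*B - A := by
  refine ⟨?_, ?_, ?_, ?_⟩
  · linear_combination e1 - 4*e2 + 3*e3 + 3*e4 - 4*e5 + e6
  · linear_combination e1 - 4*e2 + 3*e3 - 3*e4 + 4*e5 - e6
  · linear_combination e1 - 2*e2 + e3 - e4 + 2*e5 - e6
  · linear_combination e1 - 2*e2 + e3 + e4 - 2*e5 + e6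

set_option maxHeartbeats 2000000 in
/-- for the fifth-order CWENOZ scheme (r = 3), τ = |I[P₁] − I[P₃]| = O(h⁵). -/
theorem cwenoz_tau_order_stmt13 (u : ℝ → ℝ) (hu : ContDiff ℝ (⊤ : ℕ∞) u)
    (P : ℕ → ℝ → Polynomial ℝ)
    (hP : ∀ k, 1 ≤ k → k ≤ 3 → ∀ h : ℝ, 0 < h →
      (P k h).natDegree ≤ 2 ∧
      ∀ j ∈ Finset.Icc ((k : ℤ) - 3) ((k : ℤ) - 1),
        cellAvg h j (fun x => (P k h).eval x) = cellAvg h j u) :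
    ∃ C > 0, ∃ h0 > 0, ∀ h : ℝ, 0 < h → h < h0 →
      |JS 2 h (P 1 h) - JS 2 h (P 3 h)| ≤ C * h ^ 5 := by
  have hu' : ContDiff ℝ (⊤:ℕ∞) u := hu.of_le (by simp)
  set V : ℝ → ℝ := fun x => ∫ t in (0:ℝ)..x, u t with hVdef
  have hVc : ContDiff ℝ (⊤:ℕ∞) V := V_contDiff u hu'
  obtain ⟨M2, hM2n, hM2⟩ := get_bound V hVc 2
  obtain ⟨M3, hM3n, hM3⟩ := get_bound V hVc 3
  obtain ⟨M4, hM4n, hM4⟩ := get_bound V hVc 4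
  obtain ⟨M5, hM5n, hM5⟩ := get_bound V hVc 5
  refine ⟨2*M5*M2 + 5*M4*M3 + 1, by positivity, 1, one_pos, fun h hh hh1 => ?_⟩
  have hne : h ≠ 0 := ne_of_gt hh
  obtain ⟨hdeg1, havg1⟩ := hP 1 le_rfl (by norm_num) h hh
  obtain ⟨hdeg3, havg3⟩ := hP 3 (by norm_num) le_rfl h hh
  have hVx : ∀ x, V x = ∫ t in (0:ℝ)..x, u t := fun x => rfl
  have huc : Continuous u := hu'.continuous
  -- the six cell-average equations
  have e1 := cell_eq h hh u huc V hVx (-2) (-2) ((-5/2)*h) ((-3/2)*h)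
    (by push_cast; ring) (by push_cast; ring) (by push_cast; ring) (P 1 h) hdeg1
    (havg1 (-2) (by decide))
  have e2 := cell_eq h hh u huc V hVx (-1) (-1) ((-3/2)*h) ((-1/2)*h)
    (by push_cast; ring) (by push_cast; ring) (by push_cast; ring) (P 1 h) hdeg1
    (havg1 (-1) (by decide))
  have e3 := cell_eq h hh u huc V hVx 0 0 ((-1/2)*h) ((1/2)*h)
    (by push_cast; ring) (by push_cast; ring) (by push_cast; ring) (P 1 h) hdeg1
    (havg1 0 (by decide))
  have e4 := cell_eq h hh u huc V hVx 0 0 ((-1/2)*h) ((1/2)*h)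
    (by push_cast; ring) (by push_cast; ring) (by push_cast; ring) (P 3 h) hdeg3
    (havg3 0 (by decide))
  have e5 := cell_eq h hh u huc V hVx 1 1 ((1/2)*h) ((3/2)*h)
    (by push_cast; ring) (by push_cast; ring) (by push_cast; ring) (P 3 h) hdeg3
    (havg3 1 (by decide))
  have e6 := cell_eq h hh u huc V hVx 2 2 ((3/2)*h) ((5/2)*h)
    (by push_cast; ring) (by push_cast; ring) (by push_cast; ring) (P 3 h) hdeg3
    (havg3 2 (by decide))
  obtain ⟨Hbd, Hbs, Hcd, Hcs⟩ := key_algebra h ((P 1 h).coeff 0) ((P 1 h).coeff 1)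
    ((P 1 h).coeff 2) ((P 3 h).coeff 0) ((P 3 h).coeff 1) ((P 3 h).coeff 2)
    (V ((-5/2)*h)) (V ((-3/2)*h)) (V ((-1/2)*h)) (V ((1/2)*h)) (V ((3/2)*h)) (V ((5/2)*h))
    e1 e2 e3 e4 e5 e6
  set b1 := (P 1 h).coeff 1
  set c1 := (P 1 h).coeff 2
  set b3 := (P 3 h).coeff 1
  set c3 := (P 3 h).coeff 2
  -- finite-difference expansions
  have E5 : (fdop h)^[5] V ((-5/2)*h)
      = V ((5/2)*h) - 5*V ((3/2)*h) + 10*V ((1/2)*h) - 10*V ((-1/2)*h) + 5*V ((-3/2)*h)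
        - V ((-5/2)*h) :=
    fdop_five h V _ _ _ _ _ _ (by ring) (by ring) (by ring) (by ring) (by ring)
  have E4a : (fdop h)^[4] V ((-5/2)*h)
      = V ((3/2)*h) - 4*V ((1/2)*h) + 6*V ((-1/2)*h) - 4*V ((-3/2)*h) + V ((-5/2)*h) :=
    fdop_four h V _ _ _ _ _ (by ring) (by ring) (by ring) (by ring)
  have E4b : (fdop h)^[4] V ((-3/2)*h)
      = V ((5/2)*h) - 4*V ((3/2)*h) + 6*V ((1/2)*h) - 4*V ((-1/2)*h) + V ((-3/2)*h) :=
    fdop_four h V _ _ _ _ _ (by ring) (by ring) (by ring) (by ring)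
  have E3a : (fdop h)^[3] V ((-5/2)*h)
      = V ((1/2)*h) - 3*V ((-1/2)*h) + 3*V ((-3/2)*h) - V ((-5/2)*h) :=
    fdop_three h V _ _ _ _ (by ring) (by ring) (by ring)
  have E3b : (fdop h)^[3] V ((-1/2)*h)
      = V ((5/2)*h) - 3*V ((3/2)*h) + 3*V ((1/2)*h) - V ((-1/2)*h) :=
    fdop_three h V _ _ _ _ (by ring) (by ring) (by ring)
  have E2a : (fdop h)^[2] V ((-5/2)*h)
      = V ((-1/2)*h) - 2*V ((-3/2)*h) + V ((-5/2)*h) :=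
    fdop_two h V _ _ _ (by ring) (by ring)
  have E2b : (fdop h)^[2] V ((-3/2)*h)
      = V ((1/2)*h) - 2*V ((-1/2)*h) + V ((-3/2)*h) :=
    fdop_two h V _ _ _ (by ring) (by ring)
  have E2c : (fdop h)^[2] V ((-1/2)*h)
      = V ((3/2)*h) - 2*V ((1/2)*h) + V ((-1/2)*h) :=
    fdop_two h V _ _ _ (by ring) (by ring)
  have E2d : (fdop h)^[2] V ((1/2)*h)
      = V ((5/2)*h) - 2*V ((3/2)*h) + V ((1/2)*h) :=
    fdop_two h V _ _ _ (by ring) (by ring)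
  -- finite-difference bounds
  have hB5 : |(fdop h)^[5] V ((-5/2)*h)| ≤ h^5 * M5 :=
    fdop_iter_bound h hh 5 V hVc 3 M5 hM5 _ (by linarith only [hh, hh1]) (by push_cast; linarith only [hh, hh1])
  have hB4a : |(fdop h)^[4] V ((-5/2)*h)| ≤ h^4 * M4 :=
    fdop_iter_bound h hh 4 V hVc 3 M4 hM4 _ (by linarith only [hh, hh1]) (by push_cast; linarith only [hh, hh1])
  have hB4b : |(fdop h)^[4] V ((-3/2)*h)| ≤ h^4 * M4 :=
    fdop_iter_bound h hh 4 V hVc 3 M4 hM4 _ (by linarith only [hh, hh1]) (by push_cast; linarith only [hh, hh1])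
  have hB3a : |(fdop h)^[3] V ((-5/2)*h)| ≤ h^3 * M3 :=
    fdop_iter_bound h hh 3 V hVc 3 M3 hM3 _ (by linarith only [hh, hh1]) (by push_cast; linarith only [hh, hh1])
  have hB3b : |(fdop h)^[3] V ((-1/2)*h)| ≤ h^3 * M3 :=
    fdop_iter_bound h hh 3 V hVc 3 M3 hM3 _ (by linarith only [hh, hh1]) (by push_cast; linarith only [hh, hh1])
  have hB2a : |(fdop h)^[2] V ((-5/2)*h)| ≤ h^2 * M2 :=
    fdop_iter_bound h hh 2 V hVc 3 M2 hM2 _ (by linarith only [hh, hh1]) (by push_cast; linarith only [hh, hh1])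
  have hB2b : |(fdop h)^[2] V ((-3/2)*h)| ≤ h^2 * M2 :=
    fdop_iter_bound h hh 2 V hVc 3 M2 hM2 _ (by linarith only [hh, hh1]) (by push_cast; linarith only [hh, hh1])
  have hB2c : |(fdop h)^[2] V ((-1/2)*h)| ≤ h^2 * M2 :=
    fdop_iter_bound h hh 2 V hVc 3 M2 hM2 _ (by linarith only [hh, hh1]) (by push_cast; linarith only [hh, hh1])
  have hB2d : |(fdop h)^[2] V ((1/2)*h)| ≤ h^2 * M2 :=
    fdop_iter_bound h hh 2 V hVc 3 M2 hM2 _ (by linarith only [hh, hh1]) (by push_cast; linarith only [hh, hh1])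
  -- bounds on the four key quantities
  have hD1 : |2*h*(b1*h - b3*h)| ≤ h^5 * M5 := by
    rw [show 2*h*(b1*h - b3*h) = (fdop h)^[5] V ((-5/2)*h) from Hbd.trans E5.symm]
    exact hB5
  have hS1 : |2*h*(b1*h + b3*h)| ≤ 8*(h^2*M2) := by
    have heq : 2*h*(b1*h + b3*h) = -((fdop h)^[2] V ((-5/2)*h)) + 3*((fdop h)^[2] V ((-3/2)*h))
        + 3*((fdop h)^[2] V ((-1/2)*h)) - (fdop h)^[2] V ((1/2)*h) := by
      rw [E2a, E2b, E2c, E2d]; linear_combination Hbs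
    obtain ⟨p1, q1⟩ := abs_le.mp hB2a
    obtain ⟨p2, q2⟩ := abs_le.mp hB2b
    obtain ⟨p3, q3⟩ := abs_le.mp hB2c
    obtain ⟨p4, q4⟩ := abs_le.mp hB2d
    rw [heq]
    exact abs_le.mpr ⟨by linarith only [p1, q1, p2, q2, p3, q3, p4, q4],
      by linarith only [p1, q1, p2, q2, p3, q3, p4, q4]⟩
  have hD2 : |2*h*(c1*h^2 - c3*h^2)| ≤ 2*(h^4*M4) := by
    have heq : 2*h*(c1*h^2 - c3*h^2)
        = -((fdop h)^[4] V ((-5/2)*h)) - (fdop h)^[4] V ((-3/2)*h) := by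
      rw [E4a, E4b]; linear_combination Hcd
    obtain ⟨p1, q1⟩ := abs_le.mp hB4a
    obtain ⟨p2, q2⟩ := abs_le.mp hB4b
    rw [heq]
    exact abs_le.mpr ⟨by linarith only [p1, q1, p2, q2], by linarith only [p1, q1, p2, q2]⟩
  have hS2 : |2*h*(c1*h^2 + c3*h^2)| ≤ 2*(h^3*M3) := by
    have heq : 2*h*(c1*h^2 + c3*h^2) = (fdop h)^[3] V ((-5/2)*h)
        + (fdop h)^[3] V ((-1/2)*h) := by
      rw [E3a, E3b]; linear_combination Hcs
    obtain ⟨p1, q1⟩ := abs_le.mp hB3a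
    obtain ⟨p2, q2⟩ := abs_le.mp hB3b
    rw [heq]
    exact abs_le.mpr ⟨by linarith only [p1, q1, p2, q2], by linarith only [p1, q1, p2, q2]⟩
  -- assemble
  rw [JS_formula h (P 1 h) hdeg1, JS_formula h (P 3 h) hdeg3]
  have hq : (b1*h)^2 + 13/3*(c1*h^2)^2 - ((b3*h)^2 + 13/3*(c3*h^2)^2)
      = ((2*h*(b1*h - b3*h)) * (2*h*(b1*h + b3*h))
        + 13/3 * ((2*h*(c1*h^2 - c3*h^2)) * (2*h*(c1*h^2 + c3*h^2)))) / (4*h^2) := by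
    field_simp
    ring
  rw [hq, abs_div]
  have h4 : (0:ℝ) < 4*h^2 := by positivity
  have hden : |4*h^2| = 4*h^2 := abs_of_pos h4
  rw [hden]
  have hnum : |(2*h*(b1*h - b3*h)) * (2*h*(b1*h + b3*h))
      + 13/3 * ((2*h*(c1*h^2 - c3*h^2)) * (2*h*(c1*h^2 + c3*h^2)))|
      ≤ 8*M5*M2*h^7 + 52/3*(M4*M3)*h^7 := by
    have t1 : |2*h*(b1*h - b3*h)| * |2*h*(b1*h + b3*h)| ≤ (h^5*M5) * (8*(h^2*M2)) :=
      mul_le_mul hD1 hS1 (abs_nonneg _) (by positivity)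
    have t2 : |2*h*(c1*h^2 - c3*h^2)| * |2*h*(c1*h^2 + c3*h^2)| ≤ (2*(h^4*M4)) * (2*(h^3*M3)) :=
      mul_le_mul hD2 hS2 (abs_nonneg _) (by positivity)
    calc |(2*h*(b1*h - b3*h)) * (2*h*(b1*h + b3*h))
        + 13/3 * ((2*h*(c1*h^2 - c3*h^2)) * (2*h*(c1*h^2 + c3*h^2)))|
        ≤ |(2*h*(b1*h - b3*h)) * (2*h*(b1*h + b3*h))|
          + |13/3 * ((2*h*(c1*h^2 - c3*h^2)) * (2*h*(c1*h^2 + c3*h^2)))| := abs_add_le _ _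
      _ = |2*h*(b1*h - b3*h)| * |2*h*(b1*h + b3*h)|
          + 13/3 * (|2*h*(c1*h^2 - c3*h^2)| * |2*h*(c1*h^2 + c3*h^2)|) := by
          rw [abs_mul (2*h*(b1*h - b3*h)), abs_mul ((13:ℝ)/3),
            abs_mul (2*h*(c1*h^2 - c3*h^2)),
            show |(13:ℝ)/3| = 13/3 from abs_of_pos (by norm_num)]
      _ ≤ (h^5*M5) * (8*(h^2*M2)) + 13/3 * ((2*(h^4*M4)) * (2*(h^3*M3))) :=
          add_le_add t1 (mul_le_mul_of_nonneg_left t2 (by norm_num))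
      _ = 8*M5*M2*h^7 + 52/3*(M4*M3)*h^7 := by ring
  calc |(2*h*(b1*h - b3*h)) * (2*h*(b1*h + b3*h))
      + 13/3 * ((2*h*(c1*h^2 - c3*h^2)) * (2*h*(c1*h^2 + c3*h^2)))| / (4*h^2)
      ≤ (8*M5*M2*h^7 + 52/3*(M4*M3)*h^7) / (4*h^2) :=
        (div_le_div_iff_of_pos_right h4).mpr hnum
    _ = (2*M5*M2 + 13/3*(M4*M3)) * h^5 := by field_simp; ring
    _ ≤ (2*M5*M2 + 5*M4*M3 + 1) * h^5 := by
        have hgap : 2*M5*M2 + 13/3*(M4*M3) ≤ 2*M5*M2 + 5*M4*M3 + 1 := by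
          have h0 : 0 ≤ M4*M3 := mul_nonneg hM4n hM3n
          linarith only [h0]
        exact mul_le_mul_of_nonneg_right hgap (by positivity)
end
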